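/- arXiv:1901.08061 — 16 statements merged into one kernel-verified Lean document; each statement's English description precedes it below -/
import Mathlib

section
/- For every X-error F on the X-cube model, every color c ∈ Fin 3 and every a ∈ ZMod L, the sum over all cells p ∈ V whose c-th coordinate equals a of σ_c(F)(p) vanishes in ZMod 2. (Materialized symmetry of the X-cube model: the product of all c-colored cell stabilizers over any dual-lattice plane of color c is the identity, so the c-colored syndrome has even parity on every such plane.) -/
/-- Positions on the periodic cubic lattice of linear size `L`. -/
abbrev V (L : ℕ) : Type := Fin 3 → ZMod L

/-- The standard basis vector in direction `i`. -/
def e (L : ℕ) (i : Fin 3) : V L := Pi.single i 1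

/-- The two directions/colors different from a given one. -/
def oth : Fin 3 → Fin 3 × Fin 3 := ![(1, 2), (0, 2), (0, 1)]

/-- The `c`-colored cell syndrome of an X-error `F` at the cell `p`. -/
def cellSyn (L : ℕ) (F : V L × Fin 3 → ZMod 2) (c : Fin 3) (p : V L) : ZMod 2 :=
  ∑ i ∈ Finset.univ.filter (fun i : Fin 3 => i ≠ c), (F (p, i) + F (p + e L i, i))

/-- The vertex syndrome of a Z-error `E` at the vertex `v`. -/
def vertSyn (L : ℕ) (E : V L × Fin 3 → ZMod 2) (v : V L) : ZMod 2 :=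
  ∑ i : Fin 3, ∑ a : Fin 2, ∑ b : Fin 2,
    E (v - ((a : ℕ) : ZMod L) • e L (oth i).1 - ((b : ℕ) : ZMod L) • e L (oth i).2, i)

/-- Materialized symmetry: the `c`-colored syndrome has even parity on every
dual-lattice plane of color `c`. -/
theorem stmt_1 (L : ℕ) [NeZero L] (hL : 2 ≤ L) (F : V L × Fin 3 → ZMod 2)
    (c : Fin 3) (a : ZMod L) :
    ∑ p ∈ Finset.univ.filter (fun p : V L => p c = a), cellSyn L F c p = 0 := by
  unfold cellSyn
  rw [Finset.sum_comm]
  apply Finset.sum_eq_zero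
  intro i hi
  simp only [Finset.mem_filter, Finset.mem_univ, true_and] at hi
  rw [Finset.sum_add_distrib]
  have key : ∑ p ∈ Finset.univ.filter (fun p : V L => p c = a), F (p + e L i, i)
      = ∑ p ∈ Finset.univ.filter (fun p : V L => p c = a), F (p, i) := by
    apply Finset.sum_nbij' (fun p => p + e L i) (fun p => p - e L i)
    · intro p hp
      simp only [Finset.mem_filter, Finset.mem_univ, true_and] at hp ⊢
      rw [← hp]
      show p c + e L i c = p c
      simp [e, Pi.single_apply, hi]
    · intro p hp
      simp only [Finset.mem_filter, Finset.mem_univ, true_and] at hp ⊢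
      rw [← hp]
      show p c - e L i c = p c
      simp [e, Pi.single_apply, hi]
    · intro p _; abel
    · intro p _; abel
    · intro p _; rfl
  rw [key]
  exact CharTwo.add_self_eq_zero _
end

section
/- For every Z-error E on the X-cube model, every direction d ∈ Fin 3 and every a ∈ ZMod L, the sum over all vertices v ∈ V whose d-th coordinate equals a of σ_A(E)(v) vanishes in ZMod 2. (Materialized symmetry of the X-cube model: the product of all vertex stabilizers A_v over any axis-aligned lattice plane is the identity, so vertex defects are created in even numbers on every lattice plane.) -/
lemma trans_sum {L : ℕ} [NeZero L] {d c : Fin 3} (hcd : c ≠ d) (a : ZMod L)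
    (f : V L → ZMod 2) :
    ∑ v ∈ Finset.univ.filter (fun v : V L => v d = a), f (v - e L c)
      = ∑ v ∈ Finset.univ.filter (fun v : V L => v d = a), f v := by
  have h0 : e L c d = 0 := by
    simp [e, Pi.single_eq_of_ne (Ne.symm hcd)]
  rw [Finset.sum_filter, Finset.sum_filter]
  refine Fintype.sum_equiv (Equiv.subRight (e L c)) _ _ fun v => ?_
  simp [Equiv.subRight, Pi.sub_apply, h0]

lemma pair_zero {L : ℕ} [NeZero L] {d k : Fin 3} (hk : k ≠ d) (a : ZMod L)
    (g : V L → ZMod 2) :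
    ∑ b : Fin 2, ∑ v ∈ Finset.univ.filter (fun v : V L => v d = a),
        g (v - ((b : ℕ) : ZMod L) • e L k) = 0 := by
  rw [Fin.sum_univ_two]
  simp only [Fin.val_zero, Fin.val_one, Nat.cast_zero, Nat.cast_one, zero_smul, one_smul,
    sub_zero]
  rw [trans_sum hk a g]
  exact CharTwo.add_self_eq_zero _

/-- Materialized symmetry: vertex defects are created in even numbers on every
axis-aligned lattice plane. -/
theorem stmt_2 (L : ℕ) [NeZero L] (hL : 2 ≤ L) (E : V L × Fin 3 → ZMod 2)
    (d : Fin 3) (a : ZMod L) :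
    ∑ v ∈ Finset.univ.filter (fun v : V L => v d = a), vertSyn L E v = 0 := by
  unfold vertSyn
  rw [Finset.sum_comm]
  refine Finset.sum_eq_zero fun i _ => ?_
  have hjk : (oth i).1 ≠ (oth i).2 := by fin_cases i <;> decide
  by_cases hk : (oth i).2 = d
  · -- pairing direction is (oth i).1, which differs from d
    have hj : (oth i).1 ≠ d := hk ▸ hjk
    -- goal: ∑ v ∈ P, ∑ a, ∑ b, E (...) = 0 ; reorder to ∑ b, ∑ a, ∑ v
    rw [Finset.sum_comm]
    rw [show (∑ x : Fin 2, ∑ v ∈ Finset.univ.filter (fun v : V L => v d = a),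
        ∑ b : Fin 2, E (v - ((x : ℕ) : ZMod L) • e L (oth i).1
            - ((b : ℕ) : ZMod L) • e L (oth i).2, i))
        = ∑ x : Fin 2, ∑ b : Fin 2, ∑ v ∈ Finset.univ.filter (fun v : V L => v d = a),
          E (v - ((x : ℕ) : ZMod L) • e L (oth i).1
            - ((b : ℕ) : ZMod L) • e L (oth i).2, i) from
      Finset.sum_congr rfl fun x _ => Finset.sum_comm]
    rw [Finset.sum_comm]
    refine Finset.sum_eq_zero fun b _ => ?_
    exact pair_zero hj a (fun w => E (w - ((b : ℕ) : ZMod L) • e L (oth i).2, i))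
  · -- pairing direction is (oth i).2
    rw [Finset.sum_comm]
    refine Finset.sum_eq_zero fun x _ => ?_
    rw [Finset.sum_comm]
    have := pair_zero hk a (fun w => E (w - ((x : ℕ) : ZMod L) • e L (oth i).1, i))
    rw [← this]
    refine Finset.sum_congr rfl fun b _ => Finset.sum_congr rfl fun v _ => ?_
    rw [sub_right_comm]
end

section
/- For every vertex v ∈ V, every cell position p ∈ V and every color c ∈ Fin 3, the number of boundary faces of the cell at p whose color differs from c and which have v as a corner is even. (Hence every vertex stabilizer A_v, a product of Pauli-X on all faces having v as a corner, commutes with every cell stabilizer B_c^c, a product of Pauli-Z on the boundary faces of the cell whose color differs from c; the X-cube model is a well-defined stabilizer code.) -/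
/-- The six boundary faces of the cell at position `p`. -/
def bdryFaces (L : ℕ) (p : V L) : Finset (V L × Fin 3) :=
  (Finset.univ.image fun i : Fin 3 => (p, i)) ∪
    (Finset.univ.image fun i : Fin 3 => (p + e L i, i))

/-- The four corner vertices of a face. -/
def corners (L : ℕ) (f : V L × Fin 3) : Finset (V L) :=
  Finset.univ.image fun ab : Fin 2 × Fin 2 =>
    f.1 + ((ab.1 : ℕ) : ZMod L) • e L (oth f.2).1 + ((ab.2 : ℕ) : ZMod L) • e L (oth f.2).2

/-- `x ∈ {0, 1}`. -/
def inS {L : ℕ} (x : ZMod L) : Prop := x = 0 ∨ x = 1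

lemma e_apply (L : ℕ) (i m : Fin 3) : e L i m = if m = i then 1 else 0 :=
  Pi.single_apply i 1 m

lemma oth_ne (c : Fin 3) : (oth c).1 ≠ c ∧ (oth c).2 ≠ c ∧ (oth c).1 ≠ (oth c).2 := by
  fin_cases c <;> decide

lemma mem_oth : ∀ c i : Fin 3, i ≠ c → i = (oth c).1 ∨ i = (oth c).2 := by decide

lemma cover : ∀ i m : Fin 3, m = i ∨ m = (oth i).1 ∨ m = (oth i).2 := by decide

lemma fin2_cast (L : ℕ) (a : Fin 2) : ((a : ℕ) : ZMod L) = 0 ∨ ((a : ℕ) : ZMod L) = 1 := by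
  fin_cases a <;> simp

lemma inS_exists {L : ℕ} {x : ZMod L} (h : inS x) : ∃ a : Fin 2, ((a : ℕ) : ZMod L) = x := by
  rcases h with h | h
  · exact ⟨0, by simp [h]⟩
  · exact ⟨1, by simp [h]⟩

lemma mem_corners (L : ℕ) (v q : V L) (i : Fin 3) :
    v ∈ corners L (q, i) ↔
      v i = q i ∧ inS (v ((oth i).1) - q ((oth i).1)) ∧ inS (v ((oth i).2) - q ((oth i).2)) := by
  obtain ⟨h1, h2, h3⟩ := oth_ne i
  have hij : ¬ i = (oth i).1 := fun hh => h1 hh.symm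
  have hik : ¬ i = (oth i).2 := fun hh => h2 hh.symm
  have hjk : ¬ (oth i).1 = (oth i).2 := h3
  have hkj : ¬ (oth i).2 = (oth i).1 := fun hh => h3 hh.symm
  constructor
  · intro h
    simp only [corners, Finset.mem_image, Finset.mem_univ, true_and] at h
    obtain ⟨⟨a, b⟩, hv⟩ := h
    subst hv
    refine ⟨?_, ?_, ?_⟩
    · simp [e_apply, hij, hik]
    · simp only [Pi.add_apply, Pi.smul_apply, smul_eq_mul, e_apply, if_pos rfl, if_neg hjk,
        mul_one, mul_zero, add_zero, inS]
      simpa using fin2_cast L a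
    · simp only [Pi.add_apply, Pi.smul_apply, smul_eq_mul, e_apply, if_pos rfl, if_neg hkj,
        mul_one, mul_zero, add_zero, inS]
      simpa using fin2_cast L b
  · rintro ⟨hi, hj, hk⟩
    obtain ⟨a, ha⟩ := inS_exists hj
    obtain ⟨b, hb⟩ := inS_exists hk
    simp only [corners, Finset.mem_image, Finset.mem_univ, true_and]
    refine ⟨(a, b), ?_⟩
    funext m
    rcases cover i m with rfl | rfl | rfl
    · simp [e_apply, hij, hik, hi.symm]
    · simp only [Pi.add_apply, Pi.smul_apply, smul_eq_mul, e_apply, if_pos rfl, if_neg hjk,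
        mul_one, mul_zero, add_zero, ha]
      ring_nf
      simp
    · simp only [Pi.add_apply, Pi.smul_apply, smul_eq_mul, e_apply, if_pos rfl, if_neg hkj,
        mul_one, mul_zero, add_zero, hb]
      ring_nf
      simp

/-- If `v` is a corner of a boundary face of color `i` of the cell at `p`, then all
coordinates of `v - p` lie in `{0,1}` and the face is `(p + (v i - p i) • e L i, i)`. -/
lemma face_determined {L : ℕ} {v p q : V L} {i : Fin 3}
    (hq : q = p ∨ q = p + e L i) (hc : v ∈ corners L (q, i)) :
    (∀ m, inS (v m - p m)) ∧ q = p + (v i - p i) • e L i := by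
  obtain ⟨h1, h2, h3⟩ := oth_ne i
  rw [mem_corners] at hc
  obtain ⟨hi, hj, hk⟩ := hc
  rcases hq with h | h
  all_goals subst q
  · have hwi : v i - p i = 0 := sub_eq_zero.mpr hi
    refine ⟨fun m => ?_, by rw [hwi, zero_smul, add_zero]⟩
    rcases cover i m with rfl | rfl | rfl
    · exact Or.inl hwi
    · exact hj
    · exact hk
  · have hqi : (p + e L i) i = p i + 1 := by simp [e_apply]
    have hwi : v i - p i = 1 := by rw [hi, hqi]; ring
    have hqm : ∀ m, m ≠ i → (p + e L i) m = p m := by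
      intro m hm; simp [e_apply, hm]
    refine ⟨fun m => ?_, by rw [hwi, one_smul]⟩
    rcases cover i m with rfl | rfl | rfl
    · exact Or.inr hwi
    · rw [hqm _ h1] at hj; exact hj
    · rw [hqm _ h2] at hk; exact hk

lemma mem_bdry {L : ℕ} (p : V L) (i : Fin 3) {x : ZMod L} (hx : inS x) :
    (p + x • e L i, i) ∈ bdryFaces L p := by
  rcases hx with rfl | rfl
  · exact Finset.mem_union_left _ (Finset.mem_image.mpr ⟨i, Finset.mem_univ i, by simp⟩)
  · exact Finset.mem_union_right _ (Finset.mem_image.mpr ⟨i, Finset.mem_univ i, by simp⟩)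

lemma corners_self {L : ℕ} (v p : V L) (i : Fin 3) (hall : ∀ m, inS (v m - p m)) :
    v ∈ corners L (p + (v i - p i) • e L i, i) := by
  obtain ⟨h1, h2, h3⟩ := oth_ne i
  rw [mem_corners]
  have hqm : ∀ m, m ≠ i → (p + (v i - p i) • e L i) m = p m := by
    intro m hm; simp [e_apply, hm]
  refine ⟨by simp [e_apply], ?_, ?_⟩
  · rw [hqm _ h1]; exact hall _
  · rw [hqm _ h2]; exact hall _

/-- Every vertex stabilizer commutes with every cell stabilizer: the number of
boundary faces of the cell at `p` of color different from `c` having `v` as a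
corner is even. -/
theorem stmt_3 (L : ℕ) (hL : 2 ≤ L) (v p : V L) (c : Fin 3) :
    Even (((bdryFaces L p).filter (fun f => f.2 ≠ c ∧ v ∈ corners L f)).card) := by
  classical
  obtain ⟨hc1, hc2, hc3⟩ := oth_ne c
  by_cases hall : ∀ m : Fin 3, inS (v m - p m)
  · have hset : (bdryFaces L p).filter (fun f => f.2 ≠ c ∧ v ∈ corners L f)
        = {(p + (v ((oth c).1) - p ((oth c).1)) • e L ((oth c).1), (oth c).1),
           (p + (v ((oth c).2) - p ((oth c).2)) • e L ((oth c).2), (oth c).2)} := by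
      ext f
      simp only [Finset.mem_filter, Finset.mem_insert, Finset.mem_singleton]
      constructor
      · rintro ⟨hbf, hne, hcor⟩
        obtain ⟨q, i⟩ := f
        have hq : q = p ∨ q = p + e L i := by
          simp only [bdryFaces, Finset.mem_union, Finset.mem_image, Finset.mem_univ,
            true_and, Prod.mk.injEq] at hbf
          rcases hbf with ⟨i', hp, hi⟩ | ⟨i', hp, hi⟩
          · exact Or.inl hp.symm
          · subst hi; exact Or.inr hp.symm
        obtain ⟨-, hq'⟩ := face_determined hq hcor
        rcases mem_oth c i hne with rfl | rfl
        · exact Or.inl (by rw [hq'])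
        · exact Or.inr (by rw [hq'])
      · rintro (rfl | rfl)
        · exact ⟨mem_bdry p _ (hall _), hc1, corners_self v p _ hall⟩
        · exact ⟨mem_bdry p _ (hall _), hc2, corners_self v p _ hall⟩
    rw [hset, Finset.card_insert_of_notMem (by simp [Prod.ext_iff]; intro _; exact hc3),
      Finset.card_singleton]
    exact ⟨1, rfl⟩
  · rw [Finset.filter_eq_empty_iff.mpr ?_, Finset.card_empty]
    · exact Even.zero
    · rintro ⟨q, i⟩ hbf ⟨hne, hcor⟩
      have hq : q = p ∨ q = p + e L i := by
        simp only [bdryFaces, Finset.mem_union, Finset.mem_image, Finset.mem_univ,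
          true_and, Prod.mk.injEq] at hbf
        rcases hbf with ⟨i', hp, hi⟩ | ⟨i', hp, hi⟩
        · exact Or.inl hp.symm
        · subst hi; exact Or.inr hp.symm
      exact hall (face_determined hq hcor).1
end

section
/- For every X-error F on the X-cube model, every color c ∈ Fin 3 and every a ∈ ZMod L, writing c′ and c″ for the two colors different from c: the number of cells p with p_c = a carrying a defect of color c′ of F is congruent modulo 2 to the number of cells p with p_c = a carrying a defect of color c″ of F. (The total number of defects of two different colors is conserved modulo 2 on every dual-lattice plane of the third color.) -/
/-- A defect of color `c` of the X-error `F` at the cell `p`. -/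
def isDefect (L : ℕ) (F : V L × Fin 3 → ZMod 2) (c : Fin 3) (p : V L) : Prop :=
  cellSyn L F c p = 0 ∧ ∀ c' : Fin 3, c' ≠ c → cellSyn L F c' p = 1

instance (L : ℕ) (F : V L × Fin 3 → ZMod 2) (c : Fin 3) (p : V L) :
    Decidable (isDefect L F c p) :=
  decidable_of_iff (cellSyn L F c p = 0 ∧ ∀ c' : Fin 3, c' ≠ c → cellSyn L F c' p = 1) Iff.rfl


private lemma syn_sum (L : ℕ) (F : V L × Fin 3 → ZMod 2) {c c' c'' : Fin 3}
    (h1 : c' ≠ c) (h2 : c'' ≠ c) (h3 : c' ≠ c'') (p : V L) :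
    cellSyn L F c p = cellSyn L F c' p + cellSyn L F c'' p := by
  unfold cellSyn
  rw [Finset.sum_filter, Finset.sum_filter, Finset.sum_filter]
  fin_cases c <;> fin_cases c' <;> fin_cases c'' <;> simp_all [Fin.sum_univ_three] <;>
    (generalize F (p, 0) + F (p + e L 0, 0) = x;
     generalize F (p, 1) + F (p + e L 1, 1) = y;
     generalize F (p, 2) + F (p + e L 2, 2) = z;
     revert x y z; decide)

private lemma plane_sum (L : ℕ) [NeZero L] (F : V L × Fin 3 → ZMod 2) (c : Fin 3) (a : ZMod L) :
    ∑ p ∈ Finset.univ.filter (fun p : V L => p c = a), cellSyn L F c p = 0 := by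
  unfold cellSyn
  rw [Finset.sum_comm]
  apply Finset.sum_eq_zero
  intro i hi
  rw [Finset.mem_filter] at hi
  have hec : e L i c = 0 := by simp [e, Pi.single_apply, hi.2]
  rw [Finset.sum_add_distrib]
  have hshift : ∑ p ∈ Finset.univ.filter (fun p : V L => p c = a), F (p + e L i, i)
      = ∑ p ∈ Finset.univ.filter (fun p : V L => p c = a), F (p, i) := by
    apply Finset.sum_equiv (Equiv.addRight (e L i))
    · intro p; simp [Pi.add_apply, hec]
    · intro p hp; rfl
  rw [hshift]
  exact CharTwo.add_self_eq_zero _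

/-- The number of defects of two different colors is conserved modulo 2 on every
dual-lattice plane of the third color. -/
theorem stmt_4 (L : ℕ) [NeZero L] (hL : 2 ≤ L) (F : V L × Fin 3 → ZMod 2)
    (c c' c'' : Fin 3) (a : ZMod L)
    (h1 : c' ≠ c) (h2 : c'' ≠ c) (h3 : c' ≠ c'') :
    (Finset.univ.filter (fun p : V L => p c = a ∧ isDefect L F c' p)).card ≡
      (Finset.univ.filter (fun p : V L => p c = a ∧ isDefect L F c'' p)).card [MOD 2] := by
  classical
  have hval : ∀ x : ZMod 2, x = 0 ∨ x = 1 := by decide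
  have huniv : ∀ d : Fin 3, d = c ∨ d = c' ∨ d = c'' := by
    revert h1 h2 h3; fin_cases c <;> fin_cases c' <;> fin_cases c'' <;> decide
  set S1 := Finset.univ.filter (fun p : V L => p c = a ∧ isDefect L F c' p) with hS1
  set S2 := Finset.univ.filter (fun p : V L => p c = a ∧ isDefect L F c'' p) with hS2
  set T := Finset.univ.filter (fun p : V L => p c = a ∧ cellSyn L F c p = 1) with hT
  have hdisj : Disjoint S1 S2 := by
    rw [Finset.disjoint_left]
    intro p hp hq
    rw [hS1, Finset.mem_filter] at hp
    rw [hS2, Finset.mem_filter] at hq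
    have e1 : cellSyn L F c' p = 0 := hp.2.2.1
    have e2 : cellSyn L F c' p = 1 := hq.2.2.2 c' h3
    rw [e1] at e2
    exact absurd e2 (by decide)
  have hunion : S1 ∪ S2 = T := by
    ext p
    simp only [hS1, hS2, hT, Finset.mem_union, Finset.mem_filter, Finset.mem_univ, true_and]
    constructor
    · rintro (⟨hpa, _, hall⟩ | ⟨hpa, _, hall⟩)
      · exact ⟨hpa, hall c h1.symm⟩
      · exact ⟨hpa, hall c h2.symm⟩
    · rintro ⟨hpa, hc⟩
      have hsum := syn_sum L F h1 h2 h3 p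
      rw [hc] at hsum
      rcases hval (cellSyn L F c' p) with hv | hv <;>
        rcases hval (cellSyn L F c'' p) with hw | hw <;> rw [hv, hw] at hsum
      · exact absurd hsum (by decide)
      · refine Or.inl ⟨hpa, hv, fun d hd => ?_⟩
        rcases huniv d with rfl | rfl | rfl
        · exact hc
        · exact absurd rfl hd
        · exact hw
      · refine Or.inr ⟨hpa, hw, fun d hd => ?_⟩
        rcases huniv d with rfl | rfl | rfl
        · exact hc
        · exact hv
        · exact absurd rfl hd
      · exact absurd hsum (by decide)
  have hcard : S1.card + S2.card = T.card := by
    rw [← Finset.card_union_of_disjoint hdisj, hunion]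
  have hT2 : T = (Finset.univ.filter (fun p : V L => p c = a)).filter
      (fun p => cellSyn L F c p = 1) := by
    rw [Finset.filter_filter]
  have heq : ∑ p ∈ Finset.univ.filter (fun p : V L => p c = a), cellSyn L F c p
      = ((T.card : ℕ) : ZMod 2) := by
    rw [hT2, ← Finset.sum_boole]
    apply Finset.sum_congr rfl
    intro p _
    rcases hval (cellSyn L F c p) with h | h <;> simp [h]
  have hcast : ((T.card : ℕ) : ZMod 2) = 0 := heq.symm.trans (plane_sum L F c a)
  have hdvd : 2 ∣ T.card := (CharP.cast_eq_zero_iff (ZMod 2) 2 _).mp hcast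
  unfold Nat.ModEq
  omega
end

section
/- Let D be a finite type of defects with a coloring χ : D → Fin 3, whose colors are called r = 0, g = 1, b = 2. Let f : D → D (the 'blue matching') be an involution whose fixed points are exactly the b-colored elements, and let h : D → D (the 'green matching') be an involution whose fixed points are exactly the g-colored elements. Form the simple graph G on D in which distinct u, w are adjacent iff f u = w or h u = w. Then in every connected component of G, the numbers of r-colored, g-colored and b-colored vertices are pairwise congruent modulo 2. (A matched correctable cluster of cell defects has an equal number of defects of each color modulo 2.) -/
attribute [local instance] Classical.propDecidable

/-- A finset invariant under a fixed-point-free involution has even cardinality. -/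
lemma even_card_of_invol {α : Type*} [DecidableEq α] (s : Finset α) (k : α → α)
    (hmem : ∀ x ∈ s, k x ∈ s) (hk : ∀ x ∈ s, k (k x) = x) (hne : ∀ x ∈ s, k x ≠ x) :
    Even s.card := by
  induction s using Finset.strongInduction with
  | _ s ih =>
    rcases s.eq_empty_or_nonempty with rfl | ⟨x, hx⟩
    · simp
    · have hkx : k x ∈ s := hmem x hx
      set t := s \ {x, k x} with ht
      have hsub : t ⊂ s := by
        constructor
        · exact Finset.sdiff_subset
        · intro hle
          have := hle hx
          simp [ht] at this
      have hcard : s.card = t.card + 2 := by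
        have hsubset : ({x, k x} : Finset α) ⊆ s := by
          intro y hy; simp at hy; rcases hy with rfl | rfl <;> assumption
        have h2 : ({x, k x} : Finset α).card = 2 := by
          rw [Finset.card_insert_of_notMem (by simp [Ne.symm (hne x hx)]),
            Finset.card_singleton]
        have hle := Finset.card_le_card hsubset
        rw [h2] at hle
        rw [ht, Finset.card_sdiff_of_subset hsubset, h2]
        omega
      have hteven : Even t.card := by
        refine ih t hsub (fun y hy => ?_) (fun y hy => hk y (Finset.mem_sdiff.mp hy).1)
          (fun y hy => hne y (Finset.mem_sdiff.mp hy).1)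
        rw [ht, Finset.mem_sdiff] at hy ⊢
        obtain ⟨hys, hyn⟩ := hy
        simp only [Finset.mem_insert, Finset.mem_singleton] at hyn ⊢
        push_neg at hyn ⊢
        refine ⟨hmem y hys, ?_, ?_⟩
        · intro hkyx
          apply hyn.2
          rw [← hkyx, hk y hys]
        · intro hkykx
          apply hyn.1
          have := congrArg k hkykx
          rwa [hk y hys, hk x hx] at this
      obtain ⟨m, hm⟩ := hteven
      exact ⟨m + 1, by omega⟩

/-- A matched correctable cluster of cell defects has an equal number of defects
of each color modulo 2: in every connected component of the graph formed by the
blue matching `f` and the green matching `h`, the numbers of vertices of the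
three colors are pairwise congruent modulo 2. -/
theorem stmt_5 {D : Type*} [Fintype D] (χ : D → Fin 3) (f h : D → D)
    (hf : ∀ x, f (f x) = x) (hh : ∀ x, h (h x) = x)
    (hfixf : ∀ x, f x = x ↔ χ x = 2) (hfixh : ∀ x, h x = x ↔ χ x = 1)
    (G : SimpleGraph D)
    (hG : G = SimpleGraph.fromRel (fun u w => f u = w ∨ h u = w))
    (C : G.ConnectedComponent) (c c' : Fin 3) :
    (Finset.univ.filter (fun v => G.connectedComponentMk v = C ∧ χ v = c)).card ≡
      (Finset.univ.filter (fun v => G.connectedComponentMk v = C ∧ χ v = c')).card [MOD 2] := by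
  classical
  set A : Fin 3 → Finset D :=
    fun d => Finset.univ.filter (fun v => G.connectedComponentMk v = C ∧ χ v = d) with hA
  have key : ∀ (k : D → D) (d : Fin 3), (∀ x, k (k x) = x) → (∀ x, k x = x ↔ χ x = d) →
      (∀ v, k v ≠ v → G.Adj v (k v)) →
      Even (Finset.univ.filter
        (fun v => G.connectedComponentMk v = C ∧ χ v ≠ d)).card := by
    intro k d hk hfix hadj
    have hmk : ∀ v, G.connectedComponentMk (k v) = G.connectedComponentMk v := by
      intro v
      by_cases hv : k v = v
      · rw [hv]
      · exact (SimpleGraph.ConnectedComponent.sound (hadj v hv).reachable).symm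
    refine even_card_of_invol _ k (fun x hx => ?_) (fun x _ => hk x) (fun x hx => ?_)
    · simp only [Finset.mem_filter, Finset.mem_univ, true_and] at hx ⊢
      refine ⟨by rw [hmk]; exact hx.1, fun hc => hx.2 ?_⟩
      have e : k (k x) = k x := (hfix (k x)).mpr hc
      rw [hk] at e
      exact (hfix x).mp e.symm
    · simp only [Finset.mem_filter, Finset.mem_univ, true_and] at hx
      exact fun hc => hx.2 ((hfix x).mp hc)
  have hadjf : ∀ v, f v ≠ v → G.Adj v (f v) := by
    intro v hv
    rw [hG, SimpleGraph.fromRel_adj]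
    exact ⟨fun e => hv e.symm, Or.inl (Or.inl rfl)⟩
  have hadjh : ∀ v, h v ≠ v → G.Adj v (h v) := by
    intro v hv
    rw [hG, SimpleGraph.fromRel_adj]
    exact ⟨fun e => hv e.symm, Or.inl (Or.inr rfl)⟩
  have split : ∀ (d d1 d2 : Fin 3), d1 ≠ d2 → (∀ x : Fin 3, x ≠ d ↔ (x = d1 ∨ x = d2)) →
      (Finset.univ.filter (fun v => G.connectedComponentMk v = C ∧ χ v ≠ d)).card
        = (A d1).card + (A d2).card := by
    intro d d1 d2 hne12 hiff
    have hseq : (Finset.univ.filter (fun v => G.connectedComponentMk v = C ∧ χ v ≠ d))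
        = A d1 ∪ A d2 := by
      ext v
      simp only [hA, Finset.mem_union, Finset.mem_filter, Finset.mem_univ, true_and,
        hiff (χ v)]
      tauto
    have hdisj : Disjoint (A d1) (A d2) := by
      rw [Finset.disjoint_left]
      intro v hv0 hv1
      simp only [hA, Finset.mem_filter] at hv0 hv1
      exact hne12 (hv0.2.2 ▸ hv1.2.2 ▸ rfl)
    rw [hseq, Finset.card_union_of_disjoint hdisj]
  have h01 : Even ((A 0).card + (A 1).card) := by
    rw [← split 2 0 1 (by decide) (by decide)]
    exact key f 2 hf hfixf hadjf
  have h02 : Even ((A 0).card + (A 2).card) := by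
    rw [← split 1 0 2 (by decide) (by decide)]
    exact key h 1 hh hfixh hadjh
  obtain ⟨m, hm⟩ := h01
  obtain ⟨n, hn⟩ := h02
  have goal : ∀ d d' : Fin 3, (A d).card % 2 = (A d').card % 2 := by
    intro d d'
    have hd : d = 0 ∨ d = 1 ∨ d = 2 := by fin_cases d <;> simp
    have hd' : d' = 0 ∨ d' = 1 ∨ d' = 2 := by fin_cases d' <;> simp
    rcases hd with rfl | rfl | rfl <;> rcases hd' with rfl | rfl | rfl <;> omega
  exact goal c c'
end

section
/- Let L ≥ 2 and let d₀, d₁, d₂ : V → ZMod 2 be a prescribed configuration of cell syndromes satisfying (i) d₀(p) + d₁(p) + d₂(p) = 0 for every p ∈ V, and (ii) for every color c ∈ Fin 3 and every a ∈ ZMod L, the sum over all p ∈ V with p_c = a of d_c(p) vanishes. Then there exists an X-error F with σ_c(F) = d_c for all c ∈ Fin 3. (Every configuration of cell defects respecting the per-cell relation and all planar materialized symmetries of the X-cube model can be neutralized by a Pauli-X operator; this is the existence content of Theorem 1 on correcting correctable clusters of cell defects.) -/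
namespace Stmt6
variable {L : ℕ} [NeZero L]

/-- Line sum of `f` along direction `i` through `p`. -/
def LS (f : V L → ZMod 2) (i : Fin 3) (p : V L) : ZMod 2 :=
  ∑ a : ZMod L, f (Function.update p i a)

def IsInv (i : Fin 3) (f : V L → ZMod 2) : Prop :=
  ∀ p a, f (Function.update p i a) = f p

lemma isInv_LS_self (f : V L → ZMod 2) (i : Fin 3) : IsInv i (LS f i) := by
  intro p a
  unfold LS
  exact Finset.sum_congr rfl fun b _ => by rw [Function.update_idem]

lemma IsInv.LS {f : V L → ZMod 2} {i : Fin 3} (h : IsInv i f) (j : Fin 3) :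
    IsInv i (LS f j) := by
  intro p a
  unfold Stmt6.LS
  refine Finset.sum_congr rfl fun b _ => ?_
  rcases eq_or_ne j i with rfl | hji
  · rw [Function.update_idem]
  · rw [Function.update_comm (Ne.symm hji), h]

lemma LS_add (f g : V L → ZMod 2) (i : Fin 3) (p : V L) :
    LS (fun q => f q + g q) i p = LS f i p + LS g i p :=
  Finset.sum_add_distrib

lemma LS_ite_self (f : V L → ZMod 2) (i : Fin 3) (p : V L) :
    LS (fun q => if q i = 0 then f q else 0) i p = f (Function.update p i 0) := by
  unfold LS
  simp only [Function.update_self]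
  rw [Finset.sum_ite_eq' Finset.univ (0 : ZMod L) (fun a => f (Function.update p i a))]
  simp

lemma LS_ite_ne {i j : Fin 3} (hji : j ≠ i) (f : V L → ZMod 2) (p : V L) :
    LS (fun q => if q j = 0 then f q else 0) i p
      = if p j = 0 then LS f i p else 0 := by
  unfold LS
  simp only [Function.update_of_ne hji]
  by_cases h : p j = 0 <;> simp [h]

lemma LS_swap {i j : Fin 3} (hij : i ≠ j) (f : V L → ZMod 2) (p : V L) :
    LS (LS f i) j p = LS (LS f j) i p := by
  unfold LS
  rw [Finset.sum_comm]
  exact Finset.sum_congr rfl fun a _ => Finset.sum_congr rfl fun b _ => by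
    rw [Function.update_comm (Ne.symm hij)]

lemma LS_LS_eq_plane {c i j : Fin 3} (hij : i ≠ j) (hic : i ≠ c) (hjc : j ≠ c)
    (hcov : ∀ k : Fin 3, k = i ∨ k = j ∨ k = c) (f : V L → ZMod 2) (p : V L) :
    LS (LS f i) j p = ∑ q ∈ Finset.univ.filter (fun q : V L => q c = p c), f q := by
  unfold LS
  rw [← Finset.sum_product']
  refine Finset.sum_nbij' (fun x => Function.update (Function.update p j x.1) i x.2)
    (fun q => (q j, q i)) ?_ ?_ ?_ ?_ ?_
  · intro x _
    simp only [Finset.mem_filter, Finset.mem_univ, true_and]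
    rw [Function.update_of_ne (Ne.symm hic), Function.update_of_ne (Ne.symm hjc)]
  · intro q _
    exact Finset.mem_product.mpr ⟨Finset.mem_univ _, Finset.mem_univ _⟩
  · intro x _
    have h1 : (Function.update (Function.update p j x.1) i x.2) j = x.1 := by
      rw [Function.update_of_ne (Ne.symm hij), Function.update_self]
    have h2 : (Function.update (Function.update p j x.1) i x.2) i = x.2 :=
      Function.update_self _ _ _
    exact Prod.ext h1 h2
  · intro q hq
    simp only [Finset.mem_filter, Finset.mem_univ, true_and] at hq
    funext k
    show Function.update (Function.update p j (q j)) i (q i) k = q k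
    rcases hcov k with rfl | rfl | rfl
    · rw [Function.update_self]
    · rw [Function.update_of_ne (Ne.symm hij), Function.update_self]
    · rw [Function.update_of_ne (Ne.symm hic), Function.update_of_ne (Ne.symm hjc)]
      exact hq.symm
  · intro x _
    rfl

lemma zmod_sum_range (f : ZMod L → ZMod 2) :
    ∑ a ∈ Finset.range L, f ((a : ℕ) : ZMod L) = ∑ x : ZMod L, f x := by
  refine Finset.sum_nbij' (fun a : ℕ => ((a : ℕ) : ZMod L)) (fun x : ZMod L => x.val)
    ?_ ?_ ?_ ?_ ?_
  · intro a _; exact Finset.mem_univ _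
  · intro x _; exact Finset.mem_range.mpr (ZMod.val_lt x)
  · intro a ha; exact ZMod.val_cast_of_lt (Finset.mem_range.mp ha)
  · intro x _; exact ZMod.natCast_rightInverse x
  · intro a _; rfl

lemma oneD (hL : 2 ≤ L) (f : ZMod L → ZMod 2) (h : ∑ a : ZMod L, f a = 0) (x : ZMod L) :
    (∑ a ∈ Finset.range x.val, f ((a : ℕ) : ZMod L))
      + ∑ a ∈ Finset.range (x + 1).val, f ((a : ℕ) : ZMod L) = f x := by
  haveI : Fact (1 < L) := ⟨hL⟩
  have hone : (1 : ZMod L).val = 1 := ZMod.val_one L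
  have hxL : x.val < L := ZMod.val_lt x
  have hadd : (x + 1).val = (x.val + 1) % L := by rw [ZMod.val_add, hone]
  have hxx : ((x.val : ℕ) : ZMod L) = x := ZMod.natCast_rightInverse x
  rcases lt_or_ge (x.val + 1) L with hlt | hge
  · rw [hadd, Nat.mod_eq_of_lt hlt, Finset.sum_range_succ, hxx]
    have : ∀ a b : ZMod 2, a + (a + b) = b := by decide
    exact this _ _
  · have hEq : x.val + 1 = L := le_antisymm hxL hge
    have h0 : (x + 1).val = 0 := by rw [hadd, hEq, Nat.mod_self]
    rw [h0]
    simp only [Finset.range_zero, Finset.sum_empty, add_zero]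
    have hful : ∑ a ∈ Finset.range L, f ((a : ℕ) : ZMod L) = 0 := by
      rw [zmod_sum_range]; exact h
    have hrg : Finset.range L = Finset.range (x.val + 1) := by rw [hEq]
    rw [hrg, Finset.sum_range_succ, hxx] at hful
    have : ∀ a b : ZMod 2, a + b = 0 → a = b := by decide
    exact this _ _ hful

lemma exists_antideriv (hL : 2 ≤ L) (i : Fin 3) (D : V L → ZMod 2)
    (hline : ∀ p : V L, LS D i p = 0) :
    ∃ F : V L → ZMod 2, ∀ p : V L, F p + F (p + e L i) = D p := by
  refine ⟨fun p => ∑ a ∈ Finset.range (p i).val,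
    D (Function.update p i ((a : ℕ) : ZMod L)), fun p => ?_⟩
  have he : ∀ a : ZMod L, Function.update (p + e L i) i a = Function.update p i a := by
    intro a; funext k
    rcases eq_or_ne k i with rfl | hk
    · simp
    · rw [Function.update_of_ne hk, Function.update_of_ne hk]
      show p k + e L i k = p k
      rw [e, Pi.single_eq_of_ne hk, add_zero]
  have hpi : (p + e L i) i = p i + 1 := by
    show p i + e L i i = p i + 1
    rw [e, Pi.single_eq_same]
  simp only [he, hpi]
  have h1d := oneD hL (fun a => D (Function.update p i a)) (hline p) (p i)
  rwa [Function.update_eq_self] at h1d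


lemma LS_zero {f : V L → ZMod 2} (h : ∀ q, f q = 0) (i : Fin 3) (p : V L) :
    LS f i p = 0 := by
  unfold LS; simp [h]

def t1 (d : Fin 3 → V L → ZMod 2) (q : V L) : ZMod 2 :=
  if q 0 = 0 then LS (d 0) 0 q else 0

def t2 (d : Fin 3 → V L → ZMod 2) (q : V L) : ZMod 2 :=
  if q 1 = 0 then LS (d 1) 1 q + LS (t1 d) 1 q else 0

def t3 (d : Fin 3 → V L → ZMod 2) (q : V L) : ZMod 2 :=
  if q 2 = 0 then LS (d 2) 2 q + LS (t1 d) 2 q + LS (t2 d) 2 q else 0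

def tt (d : Fin 3 → V L → ZMod 2) (q : V L) : ZMod 2 :=
  t1 d q + t2 d q + t3 d q

lemma tt_spec (d : Fin 3 → V L → ZMod 2)
    (h1 : ∀ p : V L, d 0 p + d 1 p + d 2 p = 0)
    (h2 : ∀ (c : Fin 3) (a : ZMod L),
      ∑ p ∈ Finset.univ.filter (fun p : V L => p c = a), d c p = 0) :
    ∀ (i : Fin 3) (p : V L), LS (tt d) i p = LS (d i) i p := by
  have hA : IsInv 0 (LS (d 0) 0) := isInv_LS_self _ _
  have hB : IsInv 1 (LS (d 1) 1) := isInv_LS_self _ _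
  have hC : IsInv 2 (LS (d 2) 2) := isInv_LS_self _ _
  -- pointwise consequences of h1
  have hpt2 : ∀ q : V L, d 0 q + d 1 q = d 2 q := fun q =>
    (by decide : ∀ a b c : ZMod 2, a + b + c = 0 → a + b = c) _ _ _ (h1 q)
  have hpt1 : ∀ q : V L, d 0 q + d 2 q = d 1 q := fun q =>
    (by decide : ∀ a b c : ZMod 2, a + b + c = 0 → a + c = b) _ _ _ (h1 q)
  have hpt0 : ∀ q : V L, d 1 q + d 2 q = d 0 q := fun q =>
    (by decide : ∀ a b c : ZMod 2, a + b + c = 0 → b + c = a) _ _ _ (h1 q)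
  -- plane facts
  have hPz : ∀ p : V L, LS (LS (d 0) 0) 1 p + LS (LS (d 1) 1) 0 p = 0 := by
    intro p
    rw [LS_LS_eq_plane (c := 2) (by decide) (by decide) (by decide) (by decide),
      LS_LS_eq_plane (c := 2) (by decide) (by decide) (by decide) (by decide),
      ← Finset.sum_add_distrib]
    exact (Finset.sum_congr rfl fun q _ => hpt2 q).trans (h2 2 (p 2))
  have hPy : ∀ p : V L, LS (LS (d 0) 0) 2 p + LS (LS (d 2) 2) 0 p = 0 := by
    intro p
    rw [LS_LS_eq_plane (c := 1) (by decide) (by decide) (by decide) (by decide),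
      LS_LS_eq_plane (c := 1) (by decide) (by decide) (by decide) (by decide),
      ← Finset.sum_add_distrib]
    exact (Finset.sum_congr rfl fun q _ => hpt1 q).trans (h2 1 (p 1))
  have hPx : ∀ p : V L, LS (LS (d 1) 1) 2 p + LS (LS (d 2) 2) 1 p = 0 := by
    intro p
    rw [LS_LS_eq_plane (c := 0) (by decide) (by decide) (by decide) (by decide),
      LS_LS_eq_plane (c := 0) (by decide) (by decide) (by decide) (by decide),
      ← Finset.sum_add_distrib]
    exact (Finset.sum_congr rfl fun q _ => hpt0 q).trans (h2 0 (p 0))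
  -- line sums of t1
  have t1_0 : ∀ p : V L, LS (t1 d) 0 p = LS (d 0) 0 p := by
    intro p; unfold t1; rw [LS_ite_self]; exact hA p 0
  have t1_1 : ∀ p : V L, LS (t1 d) 1 p
      = if p 0 = 0 then LS (LS (d 0) 0) 1 p else 0 := by
    intro p; unfold t1; rw [LS_ite_ne (by decide)]
  have t1_2 : ∀ p : V L, LS (t1 d) 2 p
      = if p 0 = 0 then LS (LS (d 0) 0) 2 p else 0 := by
    intro p; unfold t1; rw [LS_ite_ne (by decide)]
  -- B' := fun q => LS (d 1) 1 q + LS (t1 d) 1 q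
  have hBp_inv : IsInv 1 (fun q => LS (d 1) 1 q + LS (t1 d) 1 q) := by
    intro p a
    show LS (d 1) 1 _ + LS (t1 d) 1 _ = _
    rw [hB p a, isInv_LS_self (t1 d) 1 p a]
  have hBp0 : ∀ p : V L, LS (fun q => LS (d 1) 1 q + LS (t1 d) 1 q) 0 p = 0 := by
    intro p
    rw [LS_add]
    have e2 : LS (LS (t1 d) 1) 0 p = LS (LS (d 0) 0) 1 p := by
      rw [funext t1_1, LS_ite_self]
      exact (hA.LS 1) p 0
    rw [e2, add_comm]
    exact hPz p
  -- line sums of t2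
  have t2_0 : ∀ p : V L, LS (t2 d) 0 p = 0 := by
    intro p; unfold t2; rw [LS_ite_ne (by decide)]
    by_cases h : p 1 = 0 <;> simp [h, hBp0 p]
  have t2_1 : ∀ p : V L, LS (t2 d) 1 p = LS (d 1) 1 p + LS (t1 d) 1 p := by
    intro p; unfold t2; rw [LS_ite_self]
    exact hBp_inv p 0
  have t2_2 : ∀ p : V L, LS (t2 d) 2 p
      = if p 1 = 0 then LS (fun q => LS (d 1) 1 q + LS (t1 d) 1 q) 2 p else 0 := by
    intro p; unfold t2; rw [LS_ite_ne (by decide)]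
  -- C' := fun q => LS (d 2) 2 q + LS (t1 d) 2 q + LS (t2 d) 2 q
  have hCp_inv : IsInv 2 (fun q => LS (d 2) 2 q + LS (t1 d) 2 q + LS (t2 d) 2 q) := by
    intro p a
    show LS (d 2) 2 _ + LS (t1 d) 2 _ + LS (t2 d) 2 _ = _
    rw [hC p a, isInv_LS_self (t1 d) 2 p a, isInv_LS_self (t2 d) 2 p a]
  have hCp0 : ∀ p : V L,
      LS (fun q => LS (d 2) 2 q + LS (t1 d) 2 q + LS (t2 d) 2 q) 0 p = 0 := by
    intro p
    rw [LS_add, LS_add]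
    have e1 : LS (LS (t1 d) 2) 0 p = LS (LS (d 0) 0) 2 p := by
      rw [funext t1_2, LS_ite_self]
      exact (hA.LS 2) p 0
    have e2 : LS (LS (t2 d) 2) 0 p = 0 := by
      rw [funext t2_2, LS_ite_ne (by decide)]
      have hsw : LS (LS (fun q => LS (d 1) 1 q + LS (t1 d) 1 q) 2) 0 p
          = LS (LS (fun q => LS (d 1) 1 q + LS (t1 d) 1 q) 0) 2 p :=
        LS_swap (by decide) _ p
      rw [hsw, LS_zero hBp0]
      simp
    rw [e1, e2, add_zero, add_comm]
    exact hPy p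
  have hCp1 : ∀ p : V L,
      LS (fun q => LS (d 2) 2 q + LS (t1 d) 2 q + LS (t2 d) 2 q) 1 p = 0 := by
    intro p
    rw [LS_add, LS_add]
    have e1 : LS (LS (t1 d) 2) 1 p
        = if p 0 = 0 then LS (LS (LS (d 0) 0) 2) 1 p else 0 := by
      rw [funext t1_2, LS_ite_ne (by decide)]
    have e2 : LS (LS (t2 d) 2) 1 p
        = LS (LS (d 1) 1) 2 p
          + if p 0 = 0 then LS (LS (LS (d 0) 0) 1) 2 p else 0 := by
      rw [funext t2_2, LS_ite_self]
      have := (hBp_inv.LS 2) p 0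
      rw [this, LS_add]
      congr 1
      rw [funext t1_1, LS_ite_ne (by decide)]
    rw [e1, e2]
    have hsw : LS (LS (LS (d 0) 0) 2) 1 p = LS (LS (LS (d 0) 0) 1) 2 p :=
      LS_swap (by decide) _ p
    rw [hsw]
    have : ∀ a x b : ZMod 2, a + x + (b + x) = a + b := by decide
    rw [this (LS (LS (d 2) 2) 1 p) _ (LS (LS (d 1) 1) 2 p), add_comm]
    exact hPx p
  -- line sums of t3
  have t3_0 : ∀ p : V L, LS (t3 d) 0 p = 0 := by
    intro p; unfold t3; rw [LS_ite_ne (by decide)]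
    by_cases h : p 2 = 0 <;> simp [h, hCp0 p]
  have t3_1 : ∀ p : V L, LS (t3 d) 1 p = 0 := by
    intro p; unfold t3; rw [LS_ite_ne (by decide)]
    by_cases h : p 2 = 0 <;> simp [h, hCp1 p]
  have t3_2 : ∀ p : V L, LS (t3 d) 2 p
      = LS (d 2) 2 p + LS (t1 d) 2 p + LS (t2 d) 2 p := by
    intro p; unfold t3; rw [LS_ite_self]
    exact hCp_inv p 0
  -- put it together
  intro i p
  fin_cases i
  · show LS (tt d) 0 p = LS (d 0) 0 p
    unfold tt
    rw [LS_add, LS_add, t1_0 p, t2_0 p, t3_0 p]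
    simp
  · show LS (tt d) 1 p = LS (d 1) 1 p
    unfold tt
    rw [LS_add, LS_add, t2_1 p, t3_1 p, t1_1 p]
    exact (by decide : ∀ x a : ZMod 2, x + (a + x) + 0 = a) _ _
  · show LS (tt d) 2 p = LS (d 2) 2 p
    unfold tt
    rw [LS_add, LS_add, t3_2 p]
    exact (by decide : ∀ x y a : ZMod 2, x + y + (a + x + y) = a) _ _ _

end Stmt6

/-- Every configuration of cell defects respecting the per-cell relation and all
planar materialized symmetries can be realized (hence neutralized) by a Pauli-X
operator. -/
theorem stmt_6 (L : ℕ) [NeZero L] (hL : 2 ≤ L) (d : Fin 3 → V L → ZMod 2)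
    (h1 : ∀ p : V L, d 0 p + d 1 p + d 2 p = 0)
    (h2 : ∀ (c : Fin 3) (a : ZMod L),
      ∑ p ∈ Finset.univ.filter (fun p : V L => p c = a), d c p = 0) :
    ∃ F : V L × Fin 3 → ZMod 2, ∀ c : Fin 3, cellSyn L F c = d c := by
  classical
  have hspec := Stmt6.tt_spec d h1 h2
  have hline : ∀ (i : Fin 3) (p : V L),
      Stmt6.LS (fun q => d i q + Stmt6.tt d q) i p = 0 := by
    intro i p
    rw [Stmt6.LS_add, hspec i p]
    exact (by decide : ∀ a : ZMod 2, a + a = 0) _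
  choose F hF using fun i : Fin 3 =>
    Stmt6.exists_antideriv hL i (fun q => d i q + Stmt6.tt d q) (hline i)
  refine ⟨fun x => F x.2 x.1, ?_⟩
  intro c
  funext p
  have key : ∀ i : Fin 3, F i p + F i (p + e L i) = d i p + Stmt6.tt d p :=
    fun i => hF i p
  fin_cases c
  · show ∑ i ∈ Finset.univ.filter (fun i : Fin 3 => i ≠ 0),
      (F i p + F i (p + e L i)) = d 0 p
    rw [show Finset.univ.filter (fun i : Fin 3 => i ≠ 0) = {1, 2} from by decide,
      Finset.sum_insert (by decide), Finset.sum_singleton, key 1, key 2]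
    exact (by decide : ∀ a b c t : ZMod 2, a + b + c = 0 → (b + t) + (c + t) = a)
      _ _ _ _ (h1 p)
  · show ∑ i ∈ Finset.univ.filter (fun i : Fin 3 => i ≠ 1),
      (F i p + F i (p + e L i)) = d 1 p
    rw [show Finset.univ.filter (fun i : Fin 3 => i ≠ 1) = {0, 2} from by decide,
      Finset.sum_insert (by decide), Finset.sum_singleton, key 0, key 2]
    exact (by decide : ∀ a b c t : ZMod 2, a + b + c = 0 → (a + t) + (c + t) = b)
      _ _ _ _ (h1 p)
  · show ∑ i ∈ Finset.univ.filter (fun i : Fin 3 => i ≠ 2),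
      (F i p + F i (p + e L i)) = d 2 p
    rw [show Finset.univ.filter (fun i : Fin 3 => i ≠ 2) = {0, 1} from by decide,
      Finset.sum_insert (by decide), Finset.sum_singleton, key 0, key 1]
    exact (by decide : ∀ a b c t : ZMod 2, a + b + c = 0 → (a + t) + (b + t) = c)
      _ _ _ _ (h1 p)
end

section
/- Let L ≥ 2 and let d : V → ZMod 2 satisfy: for every direction i ∈ Fin 3 and every a ∈ ZMod L, the sum over all v ∈ V with v_i = a of d(v) vanishes in ZMod 2. Then there exists a Z-error E with σ_A(E) = d. (Every configuration of vertex defects (fractons) respecting all planar materialized symmetries of the X-cube model can be neutralized by a Pauli-Z operator; equivalently, a cluster in which every defect is paired with a defect sharing its x coordinate, one sharing its y coordinate, and one sharing its z coordinate is neutralizable.) -/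
/-- Difference operator in direction `i`. -/
def Dd (L : ℕ) (i : Fin 3) (g : V L → ZMod 2) : V L → ZMod 2 :=
  fun v => g v + g (v - e L i)

/-- Sum over coordinate `i`. -/
def Sm (L : ℕ) [NeZero L] (i : Fin 3) (g : V L → ZMod 2) : V L → ZMod 2 :=
  fun v => ∑ t : ZMod L, g (Function.update v i t)

/-- Discrete antiderivative in coordinate `i`. -/
def Pp (L : ℕ) [NeZero L] (i : Fin 3) (g : V L → ZMod 2) : V L → ZMod 2 :=
  fun v => ∑ a ∈ Finset.range ((v i + 1).val), g (Function.update v i ((a : ℕ) : ZMod L))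

lemma sub_e_self (L : ℕ) (i : Fin 3) (v : V L) : (v - e L i) i = v i - 1 := by
  simp [e, Pi.single_eq_same]

lemma sub_e_ne (L : ℕ) {i j : Fin 3} (h : i ≠ j) (v : V L) : (v - e L j) i = v i := by
  simp [e, Pi.single_eq_of_ne h]

lemma update_sub_e_self (L : ℕ) (i : Fin 3) (v : V L) (a : ZMod L) :
    Function.update (v - e L i) i a = Function.update v i a := by
  funext m
  by_cases hm : m = i
  · subst hm; simp
  · simp [Function.update_of_ne hm, e, Pi.single_eq_of_ne hm]

lemma update_sub_e (L : ℕ) {i j : Fin 3} (h : i ≠ j) (v : V L) (a : ZMod L) :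
    Function.update (v - e L j) i a = Function.update v i a - e L j := by
  funext m
  by_cases hm : m = i
  · subst hm; simp [e, Pi.single_eq_of_ne h]
  · simp [Function.update_of_ne hm]

lemma sum_range_eq_Sm (L : ℕ) [NeZero L] (i : Fin 3) (g : V L → ZMod 2) (v : V L) :
    ∑ a ∈ Finset.range L, g (Function.update v i ((a : ℕ) : ZMod L)) = Sm L i g v := by
  rw [Sm]
  apply Finset.sum_nbij' (i := fun a => ((a : ℕ) : ZMod L)) (j := fun t => t.val)
  · intro a _; exact Finset.mem_univ _
  · intro t _; exact Finset.mem_range.mpr (ZMod.val_lt t)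
  · intro a ha; simp [ZMod.val_natCast_of_lt (Finset.mem_range.mp ha)]
  · intro t _; simp [ZMod.natCast_val, ZMod.cast_id]
  · intro a _; rfl

lemma Dd_Pp_key (L : ℕ) [NeZero L] (hL2 : 2 ≤ L) (i : Fin 3) (g : V L → ZMod 2)
    (h : ∀ v, Sm L i g v = 0) : Dd L i (Pp L i g) = g := by
  haveI : Fact (1 < L) := ⟨hL2⟩
  funext v
  have hL : 0 < L := by omega
  simp only [Dd, Pp, update_sub_e_self, sub_e_self]
  have hself : Function.update v i (((v i).val : ℕ) : ZMod L) = v := by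
    rw [ZMod.natCast_val, ZMod.cast_id, Function.update_eq_self]
  have h2 : (v i - 1 + 1).val = (v i).val := by rw [sub_add_cancel]
  rcases eq_or_ne (v i + 1) 0 with h1 | h1
  · -- v i has val L - 1
    have hveq : v i = ((L - 1 : ℕ) : ZMod L) := by
      have hc : ((L : ℕ) : ZMod L) = 0 := ZMod.natCast_self L
      push_cast [Nat.cast_sub hL]
      rw [hc]
      linear_combination h1
    have hv : (v i).val = L - 1 := by
      rw [hveq, ZMod.val_natCast_of_lt (by omega)]
    rw [h1, h2, hv, ZMod.val_zero, Finset.sum_range_zero, zero_add]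
    have hSm := sum_range_eq_Sm L i g v
    rw [h v] at hSm
    rw [show Finset.range L = Finset.range (L-1+1) from by congr 1; omega,
      Finset.sum_range_succ] at hSm
    have hgv : g (Function.update v i (((L - 1 : ℕ) : ℕ) : ZMod L)) = g v := by
      rw [← hv, hself]
    rw [hgv] at hSm
    have := neg_eq_of_add_eq_zero_left hSm
    rw [CharTwo.neg_eq] at this
    exact this.symm
  · -- generic case
    have hvlt : (v i).val + 1 < L := by
      have hlt := ZMod.val_lt (v i)
      rcases Nat.lt_or_ge ((v i).val + 1) L with h' | h'
      · exact h'
      · exfalso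
        apply h1
        have hvv : (v i).val = L - 1 := by omega
        have : v i = ((L-1 : ℕ) : ZMod L) := by
          conv_lhs => rw [← hself]
          rw [hvv]
          simp
        rw [this]
        push_cast [Nat.cast_sub hL]
        simp [ZMod.natCast_self]
    have hv1 : (v i + 1).val = (v i).val + 1 := by
      have hone : (1 : ZMod L).val = 1 := ZMod.val_one L
      rw [ZMod.val_add_of_lt (by rw [hone]; exact hvlt), hone]
    rw [hv1, h2, Finset.sum_range_succ, hself]
    rw [add_comm (∑ x ∈ Finset.range (v i).val, g (Function.update v i ((x:ℕ) : ZMod L))) (g v), add_assoc, CharTwo.add_self_eq_zero, add_zero]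

lemma Dd_Pp_comm (L : ℕ) [NeZero L] {i j : Fin 3} (h : i ≠ j) (g : V L → ZMod 2) :
    Dd L j (Pp L i g) = Pp L i (Dd L j g) := by
  funext v
  simp only [Dd, Pp, sub_e_ne L h, update_sub_e L h, Finset.sum_add_distrib]

lemma Sm_update_self (L : ℕ) [NeZero L] (i : Fin 3) (g : V L → ZMod 2) (v : V L) (t : ZMod L) :
    Sm L i g (Function.update v i t) = Sm L i g v := by
  simp [Sm, Function.update_idem]

lemma Sm_Sm_plane (L : ℕ) [NeZero L] (d : V L → ZMod 2) (i j k : Fin 3)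
    (hji : j ≠ i) (hki : k ≠ i) (hjk : j ≠ k)
    (hcov : ∀ m : Fin 3, m = i ∨ m = j ∨ m = k) (w : V L) :
    Sm L j (Sm L k d) w = ∑ v ∈ Finset.univ.filter (fun v : V L => v i = w i), d v := by
  classical
  have step : Sm L j (Sm L k d) w
      = ∑ p : ZMod L × ZMod L, d (Function.update (Function.update w j p.1) k p.2) := by
    rw [Fintype.sum_prod_type]
    rfl
  rw [step]
  apply Finset.sum_nbij'
    (i := fun p => Function.update (Function.update w j p.1) k p.2)
    (j := fun v => (v j, v k))
  · intro p _
    simp only [Finset.mem_filter, Finset.mem_univ, true_and]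
    rw [Function.update_of_ne hki.symm, Function.update_of_ne hji.symm]
  · intro v _; exact Finset.mem_univ _
  · intro p _
    have h1 : (Function.update (Function.update w j p.1) k p.2) j = p.1 := by
      rw [Function.update_of_ne hjk, Function.update_self]
    have h2 : (Function.update (Function.update w j p.1) k p.2) k = p.2 := Function.update_self _ _ _
    simp [h1, h2]
  · intro v hv
    simp only [Finset.mem_filter, Finset.mem_univ, true_and] at hv
    funext m
    rcases hcov m with hm | hm | hm <;> subst hm
    · rw [Function.update_of_ne hki.symm, Function.update_of_ne hji.symm, hv]
    · rw [Function.update_of_ne hjk, Function.update_self]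
    · rw [Function.update_self]
  · intro p _; rfl



lemma vertSyn_eq (L : ℕ) (E : V L × Fin 3 → ZMod 2) (v : V L) :
    vertSyn L E v = Dd L 1 (Dd L 2 (fun w => E (w, 0))) v
      + Dd L 0 (Dd L 2 (fun w => E (w, 1))) v
      + Dd L 0 (Dd L 1 (fun w => E (w, 2))) v := by
  simp only [vertSyn, Dd, oth, Fin.sum_univ_three, Fin.sum_univ_two,
    Matrix.cons_val_zero, Matrix.cons_val_one, Matrix.head_cons, Fin.val_zero, Fin.val_one,
    Nat.cast_zero, Nat.cast_one, zero_smul, one_smul, sub_zero, Matrix.cons_val_two,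
    Matrix.tail_cons]


/-- Every configuration of vertex defects (fractons) respecting all planar
materialized symmetries can be realized (hence neutralized) by a Pauli-Z
operator. -/
theorem stmt_7 (L : ℕ) [NeZero L] (hL : 2 ≤ L) (d : V L → ZMod 2)
    (hd : ∀ (i : Fin 3) (a : ZMod L),
      ∑ v ∈ Finset.univ.filter (fun v : V L => v i = a), d v = 0) :
    ∃ E : V L × Fin 3 → ZMod 2, vertSyn L E = d := by
  classical
  set c : V L → ZMod 2 := Sm L 1 d with hc
  set r : V L → ZMod 2 := Sm L 0 d with hr
  set f₁ : V L → ZMod 2 := fun v => if v 1 = 0 then c v else 0 with hf₁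
  set f₂ : V L → ZMod 2 := fun v => if v 0 = 0 then r v else 0 with hf₂
  set f₀ : V L → ZMod 2 := fun v => d v + f₁ v + f₂ v with hf₀
  have H0 : ∀ w : V L, Sm L 2 c w = 0 := fun w => by
    rw [hc, Sm_Sm_plane L d 0 2 1 (by decide) (by decide) (by decide) (by decide) w]
    exact hd 0 (w 0)
  have H1 : ∀ w : V L, Sm L 2 r w = 0 := fun w => by
    rw [hr, Sm_Sm_plane L d 1 2 0 (by decide) (by decide) (by decide) (by decide) w]
    exact hd 1 (w 1)
  have H2a : ∀ w : V L, Sm L 0 c w = 0 := fun w => by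
    rw [hc, Sm_Sm_plane L d 2 0 1 (by decide) (by decide) (by decide) (by decide) w]
    exact hd 2 (w 2)
  have H2b : ∀ w : V L, Sm L 1 r w = 0 := fun w => by
    rw [hr, Sm_Sm_plane L d 2 1 0 (by decide) (by decide) (by decide) (by decide) w]
    exact hd 2 (w 2)
  -- Sm of f₁
  have hS2f₁ : ∀ v, Sm L 2 f₁ v = 0 := by
    intro v
    have h12 : (1 : Fin 3) ≠ 2 := by decide
    by_cases hv : v 1 = 0
    · have : Sm L 2 f₁ v = Sm L 2 c v := by
        simp [Sm, hf₁, Function.update_of_ne h12, hv]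
      rw [this, H0 v]
    · simp [Sm, hf₁, Function.update_of_ne h12, hv]
  have hS0f₁ : ∀ v, Sm L 0 f₁ v = 0 := by
    intro v
    have h10 : (1 : Fin 3) ≠ 0 := by decide
    by_cases hv : v 1 = 0
    · have : Sm L 0 f₁ v = Sm L 0 c v := by
        simp [Sm, hf₁, Function.update_of_ne h10, hv]
      rw [this, H2a v]
    · simp [Sm, hf₁, Function.update_of_ne h10, hv]
  have hS2f₂ : ∀ v, Sm L 2 f₂ v = 0 := by
    intro v
    have h02 : (0 : Fin 3) ≠ 2 := by decide
    by_cases hv : v 0 = 0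
    · have : Sm L 2 f₂ v = Sm L 2 r v := by
        simp [Sm, hf₂, Function.update_of_ne h02, hv]
      rw [this, H1 v]
    · simp [Sm, hf₂, Function.update_of_ne h02, hv]
  have hS1f₂ : ∀ v, Sm L 1 f₂ v = 0 := by
    intro v
    have h01 : (0 : Fin 3) ≠ 1 := by decide
    by_cases hv : v 0 = 0
    · have : Sm L 1 f₂ v = Sm L 1 r v := by
        simp [Sm, hf₂, Function.update_of_ne h01, hv]
      rw [this, H2b v]
    · simp [Sm, hf₂, Function.update_of_ne h01, hv]
  have hS1f₁eq : ∀ v, Sm L 1 f₁ v = c v := by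
    intro v
    have : Sm L 1 f₁ v = ∑ t : ZMod L, if t = 0 then c (Function.update v 1 t) else 0 := by
      simp [Sm, hf₁]
    rw [this]
    rw [Finset.sum_ite_eq' Finset.univ (0 : ZMod L) (fun t => c (Function.update v 1 t))]
    simp only [Finset.mem_univ, if_true]
    rw [hc, Sm_update_self]
  have hS0f₂eq : ∀ v, Sm L 0 f₂ v = r v := by
    intro v
    have : Sm L 0 f₂ v = ∑ t : ZMod L, if t = 0 then r (Function.update v 0 t) else 0 := by
      simp [Sm, hf₂]
    rw [this]
    rw [Finset.sum_ite_eq' Finset.univ (0 : ZMod L) (fun t => r (Function.update v 0 t))]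
    simp only [Finset.mem_univ, if_true]
    rw [hr, Sm_update_self]
  have hS1f₀ : ∀ v, Sm L 1 f₀ v = 0 := by
    intro v
    have hsplit : Sm L 1 f₀ v = Sm L 1 d v + Sm L 1 f₁ v + Sm L 1 f₂ v := by
      simp [Sm, hf₀, Finset.sum_add_distrib]
    rw [hsplit, hS1f₁eq v, hS1f₂ v, ← hc]
    have : ∀ a : ZMod 2, a + a + 0 = 0 := by decide
    exact this _
  have hS0f₀ : ∀ v, Sm L 0 f₀ v = 0 := by
    intro v
    have hsplit : Sm L 0 f₀ v = Sm L 0 d v + Sm L 0 f₁ v + Sm L 0 f₂ v := by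
      simp [Sm, hf₀, Finset.sum_add_distrib]
    rw [hsplit, hS0f₁ v, hS0f₂eq v, ← hr]
    have : ∀ a : ZMod 2, a + 0 + a = 0 := by decide
    exact this _
  refine ⟨fun p => if p.2 = 0 then Pp L 1 (Pp L 2 f₂) p.1
    else if p.2 = 1 then Pp L 0 (Pp L 2 f₁) p.1 else Pp L 0 (Pp L 1 f₀) p.1, ?_⟩
  funext v
  rw [vertSyn_eq]
  have e0 : (fun w : V L => if (0 : Fin 3) = 0 then Pp L 1 (Pp L 2 f₂) w
      else if (0 : Fin 3) = 1 then Pp L 0 (Pp L 2 f₁) w else Pp L 0 (Pp L 1 f₀) w)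
      = Pp L 1 (Pp L 2 f₂) := by funext w; simp
  have e1 : (fun w : V L => if (1 : Fin 3) = 0 then Pp L 1 (Pp L 2 f₂) w
      else if (1 : Fin 3) = 1 then Pp L 0 (Pp L 2 f₁) w else Pp L 0 (Pp L 1 f₀) w)
      = Pp L 0 (Pp L 2 f₁) := by funext w; simp
  have e2 : (fun w : V L => if (2 : Fin 3) = 0 then Pp L 1 (Pp L 2 f₂) w
      else if (2 : Fin 3) = 1 then Pp L 0 (Pp L 2 f₁) w else Pp L 0 (Pp L 1 f₀) w)
      = Pp L 0 (Pp L 1 f₀) := by funext w; simp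
  rw [e0, e1, e2]
  rw [Dd_Pp_comm L (show (1:Fin 3) ≠ 2 by decide) (Pp L 2 f₂),
    Dd_Pp_key L hL 2 f₂ hS2f₂,
    Dd_Pp_key L hL 1 f₂ hS1f₂,
    Dd_Pp_comm L (show (0:Fin 3) ≠ 2 by decide) (Pp L 2 f₁),
    Dd_Pp_key L hL 2 f₁ hS2f₁,
    Dd_Pp_key L hL 0 f₁ hS0f₁,
    Dd_Pp_comm L (show (0:Fin 3) ≠ 1 by decide) (Pp L 1 f₀),
    Dd_Pp_key L hL 1 f₀ hS1f₀,
    Dd_Pp_key L hL 0 f₀ hS0f₀]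
  rw [hf₀]
  have : ∀ a b x : ZMod 2, a + b + (x + b + a) = x := by decide
  exact this _ _ _
end

section
/- Let L ≥ 2 and let d : (ZMod L)² → ZMod 2 be such that every row sum and every column sum of d vanishes, i.e. Σ_{x} d(x, y₀) = 0 for all y₀ ∈ ZMod L and Σ_{y} d(x₀, y) = 0 for all x₀ ∈ ZMod L. Then there exists F : (ZMod L)² → ZMod 2 with d(v) = F(v) + F(v − e₁) + F(v − e₂) + F(v − e₁ − e₂) for every v ∈ (ZMod L)². (The planar correction step of the vertex-defect decoder: defects on a single lattice plane, each paired with another in its row and another in its column, mark the corners of a boundary whose interior can be flipped to neutralize them.) -/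
abbrev V2 (L : ℕ) : Type := Fin 2 → ZMod L
def e2 (L : ℕ) (i : Fin 2) : V2 L := Pi.single i 1

section helpers
variable {L : ℕ} [NeZero L]

lemma sum_zmod_eq_range (f : ZMod L → ZMod 2) :
    ∑ x : ZMod L, f x = ∑ i ∈ Finset.range L, f ↑i := by
  refine Finset.sum_nbij' (fun x => x.val) (fun i => (i : ZMod L)) ?_ ?_ ?_ ?_ ?_
  · intro x _; exact Finset.mem_range.mpr (ZMod.val_lt x)
  · intro i _; exact Finset.mem_univ _
  · intro x _; simp [ZMod.natCast_val, ZMod.cast_id]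
  · intro i hi; exact ZMod.val_cast_of_lt (Finset.mem_range.mp hi)
  · intro x _; simp [ZMod.natCast_val, ZMod.cast_id]

lemma sub_one_val {x : ZMod L} (hx : x ≠ 0) : (x - 1).val = x.val - 1 := by
  have h1 : 1 ≤ x.val := Nat.one_le_iff_ne_zero.mpr (fun h => hx ((ZMod.val_eq_zero x).mp h))
  have : x - 1 = ((x.val - 1 : ℕ) : ZMod L) := by
    push_cast [h1]
    simp [ZMod.natCast_val, ZMod.cast_id]
  rw [this, ZMod.val_cast_of_lt (lt_of_le_of_lt (Nat.sub_le _ _) (ZMod.val_lt x))]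

lemma neg_one_val (hL : 2 ≤ L) : ((0 : ZMod L) - 1).val = L - 1 := by
  have : ((0 : ZMod L) - 1) = ((L - 1 : ℕ) : ZMod L) := by
    push_cast [show 1 ≤ L from by omega]
    simp
  rw [this, ZMod.val_cast_of_lt (by omega)]

end helpers

/-- The planar correction step of the vertex-defect decoder: a configuration on
the 2-torus whose every row sum and column sum vanishes is the corner syndrome
of some error on the unit squares. -/
theorem stmt_8 (L : ℕ) [NeZero L] (hL : 2 ≤ L) (d : V2 L → ZMod 2)
    (hrow : ∀ y₀ : ZMod L,
      ∑ v ∈ Finset.univ.filter (fun v : V2 L => v 1 = y₀), d v = 0)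
    (hcol : ∀ x₀ : ZMod L,
      ∑ v ∈ Finset.univ.filter (fun v : V2 L => v 0 = x₀), d v = 0) :
    ∃ F : V2 L → ZMod 2, ∀ v : V2 L,
      d v = F v + F (v - e2 L 0) + F (v - e2 L 1) + F (v - e2 L 0 - e2 L 1) := by
  classical
  set D : ℕ → ℕ → ZMod 2 := fun i j => d ![(i : ZMod L), (j : ZMod L)] with hD
  -- row and column sums in ℕ form
  have hfilt1 : ∀ y₀ : ZMod L,
      ∑ v ∈ Finset.univ.filter (fun v : V2 L => v 1 = y₀), d v = ∑ x : ZMod L, d ![x, y₀] := by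
    intro y₀
    rw [Finset.sum_filter, ← (finTwoArrowEquiv (ZMod L)).symm.sum_comp]
    simp [finTwoArrowEquiv, Fintype.sum_prod_type]
  have hfilt0 : ∀ x₀ : ZMod L,
      ∑ v ∈ Finset.univ.filter (fun v : V2 L => v 0 = x₀), d v = ∑ y : ZMod L, d ![x₀, y] := by
    intro x₀
    rw [Finset.sum_filter, ← (finTwoArrowEquiv (ZMod L)).symm.sum_comp]
    simp [finTwoArrowEquiv, Fintype.sum_prod_type]
  have hrowN : ∀ j : ℕ, ∑ i ∈ Finset.range L, D i j = 0 := by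
    intro j
    have := hrow (j : ZMod L)
    rw [hfilt1, sum_zmod_eq_range] at this
    exact this
  have hcolN : ∀ i : ℕ, ∑ j ∈ Finset.range L, D i j = 0 := by
    intro i
    have := hcol (i : ZMod L)
    rw [hfilt0, sum_zmod_eq_range] at this
    exact this
  set colg : ℕ → ℕ → ZMod 2 := fun x y => ∑ j ∈ Finset.range (y + 1), D x j with hcolg
  refine ⟨fun v => ∑ i ∈ Finset.range ((v 0).val + 1), colg i ((v 1).val), ?_⟩
  have hswap : ∀ a b : ZMod 2, a + b + a = b := by decide
  -- telescoping in the first coordinate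
  have hF : ∀ (x : ZMod L) (y : ℕ),
      (∑ i ∈ Finset.range (x.val + 1), colg i y)
        + (∑ i ∈ Finset.range ((x - 1).val + 1), colg i y) = colg x.val y := by
    intro x y
    by_cases hx : x = 0
    · subst hx
      rw [neg_one_val hL, show L - 1 + 1 = L from by omega, ZMod.val_zero]
      have hz : ∑ i ∈ Finset.range L, colg i y = 0 := by
        rw [hcolg]
        rw [Finset.sum_comm]
        simp [hrowN]
      simp [hz]
    · have h1 : 1 ≤ x.val := Nat.one_le_iff_ne_zero.mpr (fun h => hx ((ZMod.val_eq_zero x).mp h))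
      rw [sub_one_val hx, Nat.sub_add_cancel h1, Finset.sum_range_succ, hswap]
  -- telescoping in the second coordinate
  have hg : ∀ (x : ℕ) (y : ZMod L),
      colg x y.val + colg x (y - 1).val = D x y.val := by
    intro x y
    by_cases hy : y = 0
    · subst hy
      rw [neg_one_val hL, ZMod.val_zero]
      rw [hcolg]
      simp only []
      rw [show L - 1 + 1 = L from by omega, hcolN x]
      simp
    · have h1 : 1 ≤ y.val := Nat.one_le_iff_ne_zero.mpr (fun h => hy ((ZMod.val_eq_zero y).mp h))
      rw [sub_one_val hy]
      have h2 : colg x y.val = colg x (y.val - 1) + D x y.val := by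
        have h3 := Finset.sum_range_succ (fun j => D x j) y.val
        rw [hcolg]
        simp only []
        rw [Nat.sub_add_cancel h1]
        exact h3
      rw [h2]
      exact hswap _ _
  intro v
  have hc1 : (v - e2 L 0) 0 = v 0 - 1 := by simp [e2]
  have hc2 : (v - e2 L 0) 1 = v 1 := by simp [e2]
  have hc3 : (v - e2 L 1) 0 = v 0 := by simp [e2]
  have hc4 : (v - e2 L 1) 1 = v 1 - 1 := by simp [e2]
  have hc5 : (v - e2 L 0 - e2 L 1) 0 = v 0 - 1 := by simp [e2]
  have hc6 : (v - e2 L 0 - e2 L 1) 1 = v 1 - 1 := by simp [e2]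
  beta_reduce
  rw [hc1, hc2, hc3, hc4, hc5, hc6]
  have hre : ∀ a b c e : ZMod 2, a + b + c + e = (a + b) + (c + e) := by decide
  rw [hre, hF (v 0) ((v 1).val), hF (v 0) ((v 1 - 1).val), hg ((v 0).val) (v 1)]
  have hv : (![((v 0).val : ZMod L), ((v 1).val : ZMod L)] : V2 L) = v := by
    funext i
    fin_cases i <;> simp [ZMod.natCast_val, ZMod.cast_id]
  rw [hD]
  simp only []
  rw [hv]
end

section
/- Let L ≥ 2, p ∈ V, i ∈ Fin 3, and 1 ≤ n < L, and let F be the X-error equal to 1 exactly on the n faces (p + t·e_i, i) for 0 ≤ t ≤ n − 1. Then σ_i(F) = 0 identically, and for each color c ≠ i, σ_c(F)(q) = 1 if and only if q ∈ {p − e_i, p + (n−1)·e_i}. (A string of Pauli-X errors along a dual-lattice line in direction i creates exactly one pair of lineon defects of color i, located at the two end cells of the string, and no other defects.) -/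
/-- A string of Pauli-X errors along a dual-lattice line in direction `i`
creates exactly one pair of lineon defects of color `i` at the end cells of the
string, and no other defects. -/
theorem stmt_9 (L : ℕ) (hL : 2 ≤ L) (p : V L) (i : Fin 3) (n : ℕ)
    (hn1 : 1 ≤ n) (hn2 : n < L) (F : V L × Fin 3 → ZMod 2)
    (hF : ∀ (q : V L) (m : Fin 3), F (q, m) = 1 ↔
      (m = i ∧ ∃ t : Fin n, q = p + ((t : ℕ) : ZMod L) • e L i)) :
    (∀ q : V L, cellSyn L F i q = 0) ∧
      ∀ c : Fin 3, c ≠ i → ∀ q : V L,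
        (cellSyn L F c q = 1 ↔
          (q = p - e L i ∨ q = p + ((n - 1 : ℕ) : ZMod L) • e L i)) := by
  classical
  haveI : NeZero L := ⟨by omega⟩
  have h2 : ∀ x : ZMod 2, x = 0 ∨ x = 1 := by decide
  have hF0 : ∀ q (m : Fin 3), m ≠ i → F (q, m) = 0 := by
    intro q m hm
    rcases h2 (F (q, m)) with h | h
    · exact h
    · exact absurd ((hF q m).mp h).1 hm
  have hFi : ∀ q, F (q, i) =
      if (∃ t : Fin n, q = p + ((t : ℕ) : ZMod L) • e L i) then 1 else 0 := by
    intro q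
    by_cases h : ∃ t : Fin n, q = p + ((t : ℕ) : ZMod L) • e L i
    · simp only [h, if_true]; exact (hF q i).mpr ⟨rfl, h⟩
    · simp only [h, if_false]
      rcases h2 (F (q, i)) with h0 | h1
      · exact h0
      · exact absurd ((hF q i).mp h1).2 h
  have key : ∀ a b : ZMod L, p + a • e L i = p + b • e L i → a = b := by
    intro a b h
    have := congrFun h i
    simpa [e, Pi.single_eq_same] using this
  have castinj : ∀ s t : ℕ, s < L → t < L → ((s : ZMod L) = t) → s = t := by
    intro s t hs ht h
    have := congrArg ZMod.val h
    rwa [ZMod.val_cast_of_lt hs, ZMod.val_cast_of_lt ht] at this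
  constructor
  · intro q
    apply Finset.sum_eq_zero
    intro m hm
    have hmi : m ≠ i := (Finset.mem_filter.mp hm).2
    rw [hF0 _ _ hmi, hF0 _ _ hmi, add_zero]
  · intro c hc q
    have hsum : cellSyn L F c q = F (q, i) + F (q + e L i, i) := by
      unfold cellSyn
      apply Finset.sum_eq_single_of_mem i
      · simp [Ne.symm hc]
      · intro m hm hmi
        rw [hF0 _ _ hmi, hF0 _ _ hmi, add_zero]
    rw [hsum, hFi, hFi]
    set S := ∃ t : Fin n, q = p + ((t : ℕ) : ZMod L) • e L i with hSdef
    set T := ∃ t : Fin n, q + e L i = p + ((t : ℕ) : ZMod L) • e L i with hTdef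
    have hsub : p - e L i = p + (-1 : ZMod L) • e L i := by
      rw [neg_one_smul, sub_eq_add_neg]
    -- f1 : at p - e, ¬S ∧ T
    have f1 : q = p - e L i → ¬S ∧ T := by
      intro hq
      constructor
      · rintro ⟨t, ht⟩
        rw [hq, hsub] at ht
        have := key _ _ ht
        have h0 : ((t : ℕ) + 1 : ℕ) = ((0 : ℕ)) := by
          apply castinj _ _ (by omega) (by omega)
          push_cast
          rw [← this]; ring
        omega
      · refine ⟨⟨0, hn1⟩, ?_⟩
        rw [hq]
        simp [sub_add_cancel]
    have f2 : q = p + ((n - 1 : ℕ) : ZMod L) • e L i → S ∧ ¬T := by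
      intro hq
      constructor
      · exact ⟨⟨n - 1, by omega⟩, hq⟩
      · rintro ⟨t, ht⟩
        rw [hq] at ht
        have heq : p + ((n : ℕ) : ZMod L) • e L i = p + ((t : ℕ) : ZMod L) • e L i := by
          rw [← ht]
          have : ((n : ℕ) : ZMod L) = ((n - 1 : ℕ) : ZMod L) + 1 := by
            have : (n - 1) + 1 = n := by omega
            rw [← this]; push_cast; ring
          rw [this, add_smul, one_smul, add_assoc]
        have := castinj n t hn2 (by omega) (key _ _ heq)
        omega
    have f4 : S → ¬T → q = p + ((n - 1 : ℕ) : ZMod L) • e L i := by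
      rintro ⟨t, ht⟩ hT
      by_cases htn : (t : ℕ) + 1 < n
      · exfalso
        apply hT
        refine ⟨⟨(t : ℕ) + 1, htn⟩, ?_⟩
        rw [ht]
        push_cast
        rw [add_smul, one_smul, add_assoc]
      · have : (t : ℕ) = n - 1 := by have := t.2; omega
        rw [ht, this]
    have f5 : T → ¬S → q = p - e L i := by
      rintro ⟨t, ht⟩ hS
      by_cases ht1 : 1 ≤ (t : ℕ)
      · exfalso
        apply hS
        refine ⟨⟨(t : ℕ) - 1, by have := t.2; omega⟩, ?_⟩
        have : q = p + (((t : ℕ) : ZMod L) - 1) • e L i := by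
          have := congrArg (fun v => v - e L i) ht
          simpa [sub_smul, add_sub_assoc] using this
        rw [this]
        congr 2
        push_cast [Nat.cast_sub ht1]
        ring
      · have ht0 : (t : ℕ) = 0 := by omega
        rw [ht0] at ht
        simp only [Nat.cast_zero, zero_smul, add_zero] at ht
        have := congrArg (fun v => v - e L i) ht
        simpa [add_sub_cancel_right] using this
    by_cases hS : S <;> by_cases hT : T
    · rw [if_pos hS, if_pos hT]
      constructor
      · intro h; exact absurd h (by decide)
      · rintro (h | h)
        · exact absurd hS (f1 h).1
        · exact absurd hT (f2 h).2
    · rw [if_pos hS, if_neg hT]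
      exact iff_of_true (by decide) (Or.inr (f4 hS hT))
    · rw [if_neg hS, if_pos hT]
      exact iff_of_true (by decide) (Or.inl (f5 hT hS))
    · rw [if_neg hS, if_neg hT]
      constructor
      · intro h; exact absurd h (by decide)
      · rintro (h | h)
        · exact absurd (f1 h).2 hT
        · exact absurd (f2 h).1 hS
end

section
/- Let L ≥ 2, p ∈ V and i ∈ Fin 3, and let F be the X-error equal to 1 exactly on the L faces (p + t·e_i, i) for t ∈ ZMod L. Then σ_c(F) = 0 for every color c ∈ Fin 3. (A closed string of Pauli-X operators wrapping the torus along a dual-lattice line creates no cell defects, i.e. it commutes with every stabilizer of the X-cube model: logical operators can be chosen with string-like support.) -/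
lemma zmod2_ne_one {x : ZMod 2} (h : x ≠ 1) : x = 0 := by
  revert h; revert x; decide

lemma zmod2_add_self (x : ZMod 2) : x + x = 0 := by
  revert x; decide

/-- A closed string of Pauli-X operators wrapping the torus along a dual-lattice
line creates no cell defects. -/
theorem stmt_10 (L : ℕ) (hL : 2 ≤ L) (p : V L) (i : Fin 3)
    (F : V L × Fin 3 → ZMod 2)
    (hF : ∀ (q : V L) (m : Fin 3), F (q, m) = 1 ↔
      (m = i ∧ ∃ t : ZMod L, q = p + t • e L i)) :
    ∀ (c : Fin 3) (q : V L), cellSyn L F c q = 0 := by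
  have hF0 : ∀ (q : V L) (m : Fin 3), m ≠ i → F (q, m) = 0 := by
    intro q m hm
    apply zmod2_ne_one
    intro h1
    exact hm ((hF q m).mp h1).1
  have key : ∀ q : V L, F (q + e L i, i) = F (q, i) := by
    intro q
    by_cases hline : ∃ t : ZMod L, q = p + t • e L i
    · obtain ⟨t, ht⟩ := hline
      have h1 : F (q, i) = 1 := (hF q i).mpr ⟨rfl, t, ht⟩
      have h2 : F (q + e L i, i) = 1 := by
        apply (hF _ i).mpr
        refine ⟨rfl, t + 1, ?_⟩
        rw [ht, add_smul, one_smul, add_assoc]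
      rw [h1, h2]
    · have h1 : F (q, i) = 0 := by
        apply zmod2_ne_one; intro h1
        exact hline ((hF q i).mp h1).2
      have h2 : F (q + e L i, i) = 0 := by
        apply zmod2_ne_one; intro h2
        obtain ⟨_, t, ht⟩ := (hF _ i).mp h2
        exact hline ⟨t - 1, by
          have : q = p + t • e L i - e L i := by
            rw [← ht]; abel
          rw [this, sub_smul, one_smul]; abel⟩
      rw [h1, h2]
  intro c q
  apply Finset.sum_eq_zero
  intro m hm
  simp only [Finset.mem_filter] at hm
  by_cases hmi : m = i
  · subst hmi
    rw [key, zmod2_add_self]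
  · rw [hF0 q m hmi, hF0 _ m hmi, add_zero]
end

section
/- Let L ≥ 2, p ∈ V, and i, m ∈ Fin 3 with i ≠ m, and let E be the Z-error equal to 1 exactly on the L faces (p + t·e_i, m) for t ∈ ZMod L. Then σ_A(E) = 0 identically. (A closed line of Pauli-Z operators on the faces of a single color m running along direction i ≠ m around the torus creates no vertex defects, i.e. it commutes with every vertex stabilizer of the X-cube model: the logical operator Z̄ has string-like support.) -/
/-- A closed line of Pauli-Z operators on the faces of a single color `m`
running along direction `i ≠ m` around the torus creates no vertex defects. -/
theorem stmt_11 (L : ℕ) (hL : 2 ≤ L) (p : V L) (i m : Fin 3) (him : i ≠ m)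
    (E : V L × Fin 3 → ZMod 2)
    (hE : ∀ (q : V L) (c : Fin 3), E (q, c) = 1 ↔
      (c = m ∧ ∃ t : ZMod L, q = p + t • e L i)) :
    ∀ v : V L, vertSyn L E v = 0 := by
  have two : ∀ x : ZMod 2, x + x = 0 := by decide
  have eqiff : ∀ x y : ZMod 2, (x = 1 ↔ y = 1) → x = y := by decide
  have hzero : ∀ (q : V L) (c : Fin 3), c ≠ m → E (q, c) = 0 := by
    intro q c hc
    have h := hE q c
    have h0 : ∀ x : ZMod 2, x ≠ 1 → x = 0 := by decide
    exact h0 _ (fun h1 => hc ((h.mp h1).1))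
  have hshift : ∀ q : V L, E (q - e L i, m) = E (q, m) := by
    intro q
    apply eqiff
    rw [hE, hE]
    constructor
    · rintro ⟨-, t, ht⟩
      refine ⟨rfl, t + 1, ?_⟩
      rw [sub_eq_iff_eq_add.mp ht, add_smul, one_smul]
      abel
    · rintro ⟨-, t, ht⟩
      refine ⟨rfl, t - 1, ?_⟩
      rw [ht, sub_smul, one_smul]
      abel
  have hcover : ∀ i m : Fin 3, i ≠ m → i = (oth m).1 ∨ i = (oth m).2 := by decide
  intro v
  unfold vertSyn
  rw [Finset.sum_eq_single_of_mem m (Finset.mem_univ m)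
    (fun c _ hc => Finset.sum_eq_zero fun a _ => Finset.sum_eq_zero fun b _ => hzero _ _ hc)]
  rcases hcover i m him with h | h
  · rw [h] at hshift
    rw [Fin.sum_univ_two, ← Finset.sum_add_distrib]
    apply Finset.sum_eq_zero
    intro b _
    simp only [Fin.val_zero, Fin.val_one, Nat.cast_zero, Nat.cast_one, zero_smul, one_smul,
      sub_zero]
    rw [sub_right_comm, hshift (v - ((b : ℕ) : ZMod L) • e L (oth m).2)]
    exact two _
  · rw [h] at hshift
    rw [Finset.sum_comm, Fin.sum_univ_two, ← Finset.sum_add_distrib]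
    apply Finset.sum_eq_zero
    intro a _
    simp only [Fin.val_zero, Fin.val_one, Nat.cast_zero, Nat.cast_one, zero_smul, one_smul,
      sub_zero]
    rw [hshift (v - ((a : ℕ) : ZMod L) • e L (oth m).1)]
    exact two _
end

section
/- Let L ≥ 2, p ∈ V, m ∈ Fin 3 with {j, k} = {0,1,2} \ {m}, and 1 ≤ n_j, n_k < L, and let E be the Z-error equal to 1 exactly on the n_j·n_k faces (p + s·e_j + t·e_k, m) for 0 ≤ s ≤ n_j − 1 and 0 ≤ t ≤ n_k − 1. Then σ_A(E)(v) = 1 if and only if v ∈ {p, p + n_j·e_j, p + n_k·e_k, p + n_j·e_j + n_k·e_k}. (A rectangular membrane of Pauli-Z errors supported on faces of a single color creates exactly four fracton defects, located at the corners of the membrane.) -/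
lemma zmod2_cases : ∀ x : ZMod 2, x = 0 ∨ x = 1 := by decide

lemma fin3_cover : ∀ (j k m i : Fin 3), j ≠ k → j ≠ m → k ≠ m →
    (i = j ∨ i = k ∨ i = m) := by decide

lemma exA {L n : ℕ} [NeZero L] (hn : n < L) (u : ZMod L) :
    (∃ s : Fin n, u = ((s : ℕ) : ZMod L)) ↔ u.val < n := by
  constructor
  · rintro ⟨s, rfl⟩
    rw [ZMod.val_natCast_of_lt (s.isLt.trans hn)]
    exact s.isLt
  · intro h
    exact ⟨⟨u.val, h⟩, (ZMod.natCast_zmod_val u).symm⟩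

lemma exB {L n : ℕ} [NeZero L] (hn : n < L) (u : ZMod L) :
    (∃ s : Fin n, u - 1 = ((s : ℕ) : ZMod L)) ↔ 1 ≤ u.val ∧ u.val ≤ n := by
  constructor
  · rintro ⟨s, hs⟩
    have hu : u = ((s + 1 : ℕ) : ZMod L) := by push_cast; linear_combination hs
    have hv : u.val = s + 1 := by
      rw [hu, ZMod.val_natCast_of_lt (by omega : (s : ℕ) + 1 < L)]
    have := s.isLt
    omega
  · rintro ⟨h1, h2⟩
    have hvL := ZMod.val_lt u
    refine ⟨⟨u.val - 1, by omega⟩, ?_⟩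
    show u - 1 = ((u.val - 1 : ℕ) : ZMod L)
    rw [Nat.cast_sub h1, ZMod.natCast_zmod_val, Nat.cast_one]

lemma exC {L n : ℕ} [NeZero L] (hn : n < L) (u : ZMod L) :
    (u - 1).val < n ↔ 1 ≤ u.val ∧ u.val ≤ n :=
  (exA hn (u - 1)).symm.trans (exB hn u)

lemma valEq {L n : ℕ} [NeZero L] (hn : n < L) (u : ZMod L) :
    u = ((n : ℕ) : ZMod L) ↔ u.val = n := by
  constructor
  · rintro rfl; exact ZMod.val_natCast_of_lt hn
  · rintro rfl; exact (ZMod.natCast_zmod_val u).symm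

lemma vecEq {L : ℕ} (j k m : Fin 3) (hjk : j ≠ k) (hjm : j ≠ m) (hkm : k ≠ m)
    (q r : V L) : q = r ↔ (q j = r j ∧ q k = r k ∧ q m = r m) := by
  constructor
  · rintro rfl; exact ⟨rfl, rfl, rfl⟩
  · rintro ⟨h1, h2, h3⟩
    funext i
    rcases fin3_cover j k m i hjk hjm hkm with rfl | rfl | rfl <;> assumption

lemma main_sum {L : ℕ} (hL : 2 ≤ L) (p : V L) (m j k : Fin 3)
    (hjk : j ≠ k) (hjm : j ≠ m) (hkm : k ≠ m) (nj nk : ℕ)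
    (hnj1 : 1 ≤ nj) (hnj2 : nj < L) (hnk1 : 1 ≤ nk) (hnk2 : nk < L)
    (E : V L × Fin 3 → ZMod 2)
    (hE : ∀ (q : V L) (c : Fin 3), E (q, c) = 1 ↔
      (c = m ∧ ∃ (s : Fin nj) (t : Fin nk),
        q = p + ((s : ℕ) : ZMod L) • e L j + ((t : ℕ) : ZMod L) • e L k)) (v : V L) :
    (∑ a : Fin 2, ∑ b : Fin 2,
      E (v - ((a : ℕ) : ZMod L) • e L j - ((b : ℕ) : ZMod L) • e L k, m)) = 1 ↔
      (v = p ∨ v = p + (nj : ZMod L) • e L j ∨ v = p + (nk : ZMod L) • e L k ∨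
        v = p + (nj : ZMod L) • e L j + (nk : ZMod L) • e L k) := by
  haveI : NeZero L := ⟨by omega⟩
  have hE0 : ∀ q : V L, E (q, m) = if (∃ (s : Fin nj) (t : Fin nk),
      q = p + ((s : ℕ) : ZMod L) • e L j + ((t : ℕ) : ZMod L) • e L k) then 1 else 0 := by
    intro q
    by_cases h : (∃ (s : Fin nj) (t : Fin nk),
        q = p + ((s : ℕ) : ZMod L) • e L j + ((t : ℕ) : ZMod L) • e L k)
    · rw [if_pos h]; exact (hE q m).2 ⟨rfl, h⟩
    · rw [if_neg h]
      rcases zmod2_cases (E (q, m)) with h0 | h1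
      · exact h0
      · exact absurd ((hE q m).1 h1).2 h
  have hcond : ∀ c d : ZMod L,
      (∃ (s : Fin nj) (t : Fin nk), v - c • e L j - d • e L k
        = p + ((s : ℕ) : ZMod L) • e L j + ((t : ℕ) : ZMod L) • e L k)
      ↔ (v m = p m ∧ (∃ s : Fin nj, v j - p j - c = ((s : ℕ) : ZMod L))
          ∧ (∃ t : Fin nk, v k - p k - d = ((t : ℕ) : ZMod L))) := by
    intro c d
    simp only [vecEq j k m hjk hjm hkm, e, Pi.add_apply, Pi.sub_apply, Pi.smul_apply,
      Pi.single_eq_same, Pi.single_eq_of_ne hjk, Pi.single_eq_of_ne hjk.symm,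
      Pi.single_eq_of_ne hjm.symm, Pi.single_eq_of_ne hkm.symm,
      smul_eq_mul, mul_one, mul_zero, sub_zero, add_zero]
    constructor
    · rintro ⟨s, t, h1, h2, h3⟩
      exact ⟨h3, ⟨s, by linear_combination h1⟩, ⟨t, by linear_combination h2⟩⟩
    · rintro ⟨h3, ⟨s, h1⟩, ⟨t, h2⟩⟩
      exact ⟨s, t, by linear_combination h1, by linear_combination h2, h3⟩
  have hcorner : ∀ cj ck : ℕ, cj < L → ck < L →
      ((v = p + (cj : ZMod L) • e L j + (ck : ZMod L) • e L k)
        ↔ (v m = p m ∧ (v j - p j).val = cj ∧ (v k - p k).val = ck)) := by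
    intro cj ck h1 h2
    rw [vecEq j k m hjk hjm hkm]
    simp only [e, Pi.add_apply, Pi.smul_apply, Pi.single_eq_same,
      Pi.single_eq_of_ne hjk, Pi.single_eq_of_ne hjk.symm,
      Pi.single_eq_of_ne hjm.symm, Pi.single_eq_of_ne hkm.symm,
      smul_eq_mul, mul_one, mul_zero, add_zero]
    rw [show (v j = p j + (cj : ZMod L)) ↔ (v j - p j = ((cj : ℕ) : ZMod L)) from
        ⟨fun h => by linear_combination h, fun h => by linear_combination h⟩,
      show (v k = p k + (ck : ZMod L)) ↔ (v k - p k = ((ck : ℕ) : ZMod L)) from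
        ⟨fun h => by linear_combination h, fun h => by linear_combination h⟩,
      valEq h1, valEq h2]
    tauto
  have h00 : (v = p) ↔ (v m = p m ∧ (v j - p j).val = 0 ∧ (v k - p k).val = 0) := by
    have := hcorner 0 0 (by omega) (by omega); simpa using this
  have hj0 : (v = p + (nj : ZMod L) • e L j)
      ↔ (v m = p m ∧ (v j - p j).val = nj ∧ (v k - p k).val = 0) := by
    have := hcorner nj 0 hnj2 (by omega); simpa using this
  have h0k : (v = p + (nk : ZMod L) • e L k)
      ↔ (v m = p m ∧ (v j - p j).val = 0 ∧ (v k - p k).val = nk) := by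
    have := hcorner 0 nk (by omega) hnk2; simpa using this
  have hjk2 : (v = p + (nj : ZMod L) • e L j + (nk : ZMod L) • e L k)
      ↔ (v m = p m ∧ (v j - p j).val = nj ∧ (v k - p k).val = nk) :=
    hcorner nj nk hnj2 hnk2
  rw [h00, hj0, h0k, hjk2]
  simp only [Fin.sum_univ_two, Fin.val_zero, Fin.val_one, Nat.cast_zero, Nat.cast_one,
    hE0, hcond, sub_zero, exA hnj2, exA hnk2, exC hnj2, exC hnk2]
  by_cases hP : v m = p m
  · simp only [hP, eq_self_iff_true, true_and]
    split_ifs <;>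
      first
        | exact iff_of_true (by decide) (by omega)
        | exact iff_of_false (by decide) (by omega)
  · simp [hP]

/-- A rectangular membrane of Pauli-Z errors supported on faces of a single
color `m` creates exactly four fracton defects, at the corners of the
membrane. Here `(oth m).1` and `(oth m).2` are the directions `j, k ≠ m`. -/
theorem stmt_12 (L : ℕ) (hL : 2 ≤ L) (p : V L) (m : Fin 3) (nj nk : ℕ)
    (hnj1 : 1 ≤ nj) (hnj2 : nj < L) (hnk1 : 1 ≤ nk) (hnk2 : nk < L)
    (E : V L × Fin 3 → ZMod 2)
    (hE : ∀ (q : V L) (c : Fin 3), E (q, c) = 1 ↔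
      (c = m ∧ ∃ (s : Fin nj) (t : Fin nk),
        q = p + ((s : ℕ) : ZMod L) • e L (oth m).1 + ((t : ℕ) : ZMod L) • e L (oth m).2)) :
    ∀ v : V L, vertSyn L E v = 1 ↔
      (v = p ∨ v = p + (nj : ZMod L) • e L (oth m).1 ∨
        v = p + (nk : ZMod L) • e L (oth m).2 ∨
        v = p + (nj : ZMod L) • e L (oth m).1 + (nk : ZMod L) • e L (oth m).2) := by
  intro v
  have hz : ∀ (q : V L) (c : Fin 3), c ≠ m → E (q, c) = 0 := by
    intro q c hc
    rcases zmod2_cases (E (q, c)) with h | h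
    · exact h
    · exact absurd ((hE q c).1 h).1 hc
  have hjm : (oth m).1 ≠ m := by fin_cases m <;> decide
  have hkm : (oth m).2 ≠ m := by fin_cases m <;> decide
  have hjk : (oth m).1 ≠ (oth m).2 := by fin_cases m <;> decide
  have hv : vertSyn L E v = ∑ a : Fin 2, ∑ b : Fin 2,
      E (v - ((a : ℕ) : ZMod L) • e L (oth m).1 - ((b : ℕ) : ZMod L) • e L (oth m).2, m) := by
    unfold vertSyn
    rw [Finset.sum_eq_single m]
    · intro i _ him
      have hzi : ∀ q : V L, E (q, i) = 0 := fun q => hz q i him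
      simp [hzi]
    · intro h; exact absurd (Finset.mem_univ m) h
  rw [hv]
  exact main_sum hL p m (oth m).1 (oth m).2 hjk hjm hkm nj nk hnj1 hnj2 hnk1 hnk2 E hE v
end

section
/- Let L ≥ 2, p ∈ V, let i, j ∈ Fin 3 be distinct with k the third direction, let 1 ≤ n, m < L, set q = p + (n−1)·e_i + e_j, and let F be the X-error equal to 1 exactly on the faces (p + t·e_i, i) for 0 ≤ t ≤ n − 1 together with the faces (q + s·e_j, j) for 0 ≤ s ≤ m − 1. Then F creates exactly three defects: a defect of color i at cell p − e_i, a defect of color j at cell q + (m−1)·e_j, and a defect of color k at the corner cell p + (n−1)·e_i; at every other cell all three syndromes σ₀(F), σ₁(F), σ₂(F) vanish. (An L-shaped string of Pauli-X errors creates lineon defects whose colors obey the ℤ₂ × ℤ₂ fusion rule at its corner: combining a color-i and a color-j defect gives a defect of the remaining color k.) -/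
lemma zmod2_eq_ite (x : ZMod 2) (Q : Prop) [Decidable Q] (h : x = 1 ↔ Q) :
    x = if Q then 1 else 0 := by
  split_ifs with hQ
  · exact h.mpr hQ
  · rcases (by decide : ∀ y : ZMod 2, y = 0 ∨ y = 1) x with h0 | h1
    · exact h0
    · exact absurd (h.mp h1) hQ

lemma fin3_cases : ∀ (i j k a : Fin 3), i ≠ j → k ≠ i → k ≠ j → a = i ∨ a = j ∨ a = k := by
  decide

lemma filter_ne_fin3 : ∀ (a b c : Fin 3), a ≠ b → a ≠ c → b ≠ c →
    Finset.univ.filter (fun x => x ≠ a) = {b, c} := by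
  decide

lemma oneD (L n : ℕ) [NeZero L] (hL : 2 ≤ L) (hn1 : 1 ≤ n) (hn2 : n < L) (x : ZMod L) :
    ((if x.val < n then 1 else 0) + (if (x + 1).val < n then 1 else 0) : ZMod 2)
      = if (x.val = n - 1 ∨ x.val = L - 1) then 1 else 0 := by
  haveI : Fact (1 < L) := ⟨by omega⟩
  have hx := ZMod.val_lt x
  have h1 : (x + 1).val = (x.val + 1) % L := by
    rw [ZMod.val_add, ZMod.val_one]
  rcases Nat.lt_or_ge (x.val + 1) L with h | h
  · rw [h1, Nat.mod_eq_of_lt h]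
    split_ifs <;> first | decide | omega
  · have hxe : x.val = L - 1 := by omega
    have : (x.val + 1) % L = 0 := by
      have : x.val + 1 = L := by omega
      simp [this]
    rw [h1, this]
    split_ifs <;> first | decide | omega

lemma zmod_val_eq_iff {L : ℕ} [NeZero L] (x : ZMod L) (v : ℕ) (hv : v < L) :
    x.val = v ↔ x = (v : ZMod L) := by
  constructor
  · intro h
    rw [← h, ZMod.natCast_rightInverse x]
  · intro h
    rw [h, ZMod.val_cast_of_lt hv]
/-- An L-shaped string of Pauli-X errors creates lineon defects whose colors
obey the ℤ₂ × ℤ₂ fusion rule at its corner: a color-`i` defect at one end, a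
color-`j` defect at the other end, and a defect of the remaining color `k` at
the corner cell, with no other defects. -/
theorem stmt_13 (L : ℕ) (hL : 2 ≤ L) (p : V L) (i j k : Fin 3)
    (hij : i ≠ j) (hki : k ≠ i) (hkj : k ≠ j)
    (n m : ℕ) (hn1 : 1 ≤ n) (hn2 : n < L) (hm1 : 1 ≤ m) (hm2 : m < L)
    (q : V L) (hq : q = p + ((n - 1 : ℕ) : ZMod L) • e L i + e L j)
    (F : V L × Fin 3 → ZMod 2)
    (hF : ∀ (r : V L) (c : Fin 3), F (r, c) = 1 ↔
      ((c = i ∧ ∃ t : Fin n, r = p + ((t : ℕ) : ZMod L) • e L i) ∨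
       (c = j ∧ ∃ s : Fin m, r = q + ((s : ℕ) : ZMod L) • e L j))) :
    isDefect L F i (p - e L i) ∧
    isDefect L F j (q + ((m - 1 : ℕ) : ZMod L) • e L j) ∧
    isDefect L F k (p + ((n - 1 : ℕ) : ZMod L) • e L i) ∧
    ∀ r : V L, r ≠ p - e L i → r ≠ q + ((m - 1 : ℕ) : ZMod L) • e L j →
      r ≠ p + ((n - 1 : ℕ) : ZMod L) • e L i →
      ∀ c : Fin 3, cellSyn L F c r = 0 := by
  haveI : NeZero L := ⟨by omega⟩
  have hji : j ≠ i := hij.symm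
  have hjk : j ≠ k := fun h => hkj h.symm
  have hik : i ≠ k := fun h => hki h.symm
  have tri : ∀ a : Fin 3, a = i ∨ a = j ∨ a = k := fun a => fin3_cases i j k a hij hki hkj
  have hco : ∀ (x : V L) (c : ZMod L) (a b : Fin 3),
      (x + c • e L a) b = x b + if b = a then c else 0 := by
    intro x c a b
    by_cases h : b = a <;> simp [e, Pi.single_apply, h]
  have hco1 : ∀ (x : V L) (a b : Fin 3), (x + e L a) b = x b + if b = a then 1 else 0 := by
    intro x a b
    by_cases h : b = a <;> simp [e, Pi.single_apply, h]
  have hco2 : ∀ (x : V L) (a b : Fin 3), (x - e L a) b = x b - if b = a then 1 else 0 := by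
    intro x a b
    by_cases h : b = a <;> simp [e, Pi.single_apply, h]
  have veq : ∀ x y : V L, x = y ↔ (x i = y i ∧ x j = y j ∧ x k = y k) := by
    intro x y
    constructor
    · rintro rfl; exact ⟨rfl, rfl, rfl⟩
    · rintro ⟨h1, h2, h3⟩
      funext b
      rcases tri b with rfl | rfl | rfl <;> assumption
  have hqi : q i = p i + ((n - 1 : ℕ) : ZMod L) := by
    rw [hq, hco1, hco]; simp [hij]
  have hqj : q j = p j + 1 := by
    rw [hq, hco1, hco]; simp [hji]
  have hqk : q k = p k := by
    rw [hq, hco1, hco]; simp [hki, hkj]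
  -- values of F
  have hFk : ∀ r : V L, F (r, k) = 0 := by
    intro r
    rcases (by decide : ∀ y : ZMod 2, y = 0 ∨ y = 1) (F (r, k)) with h0 | h1
    · exact h0
    · rcases (hF r k).mp h1 with ⟨h, -⟩ | ⟨h, -⟩
      exacts [absurd h hki, absurd h hkj]
  have hFi : ∀ r : V L, F (r, i) =
      if (r j = p j ∧ r k = p k ∧ (r i - p i).val < n) then 1 else 0 := by
    intro r
    apply zmod2_eq_ite
    rw [hF r i]
    constructor
    · rintro (⟨-, t, rfl⟩ | ⟨h, -⟩)
      · refine ⟨by rw [hco]; simp [hji], by rw [hco]; simp [hki], ?_⟩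
        rw [hco, if_pos rfl, add_sub_cancel_left,
          ZMod.val_cast_of_lt (lt_trans t.2 hn2)]
        exact t.2
      · exact absurd h hij
    · rintro ⟨h1, h2, h3⟩
      left
      refine ⟨rfl, ⟨⟨(r i - p i).val, h3⟩, ?_⟩⟩
      rw [veq]
      refine ⟨?_, ?_, ?_⟩ <;> rw [hco]
      · rw [if_pos rfl, ZMod.natCast_rightInverse (r i - p i)]
        ring
      · simp [hji, h1]
      · simp [hki, h2]
  have hFj : ∀ r : V L, F (r, j) =
      if (r i = q i ∧ r k = q k ∧ (r j - q j).val < m) then 1 else 0 := by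
    intro r
    apply zmod2_eq_ite
    rw [hF r j]
    constructor
    · rintro (⟨h, -⟩ | ⟨-, s, rfl⟩)
      · exact absurd h.symm hij
      · refine ⟨by rw [hco]; simp [hij], by rw [hco]; simp [hkj], ?_⟩
        rw [hco, if_pos rfl, add_sub_cancel_left,
          ZMod.val_cast_of_lt (lt_trans s.2 hm2)]
        exact s.2
    · rintro ⟨h1, h2, h3⟩
      right
      refine ⟨rfl, ⟨⟨(r j - q j).val, h3⟩, ?_⟩⟩
      rw [veq]
      refine ⟨?_, ?_, ?_⟩ <;> rw [hco]
      · simp [hij, h1]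
      · rw [if_pos rfl, ZMod.natCast_rightInverse (r j - q j)]
        ring
      · simp [hkj, h2]
  -- boundary values of the two strings
  have hA : ∀ r : V L, F (r, i) + F (r + e L i, i) =
      if (r j = p j ∧ r k = p k ∧ ((r i - p i).val = n - 1 ∨ (r i - p i).val = L - 1))
      then 1 else 0 := by
    intro r
    rw [hFi r, hFi (r + e L i)]
    have e1 : (r + e L i) j = r j := by rw [hco1]; simp [hji]
    have e2 : (r + e L i) k = r k := by rw [hco1]; simp [hki]
    have e3 : (r + e L i) i - p i = (r i - p i) + 1 := by
      rw [hco1, if_pos rfl]; ring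
    rw [e1, e2, e3]
    by_cases hbc : r j = p j ∧ r k = p k
    · simp only [hbc.1, hbc.2, eq_self_iff_true, true_and]
      exact oneD L n hL hn1 hn2 (r i - p i)
    · have hcf : ∀ X : Prop, ¬(r j = p j ∧ r k = p k ∧ X) := fun X h => hbc ⟨h.1, h.2.1⟩
      rw [if_neg (hcf _), if_neg (hcf _), if_neg (hcf _)]
      decide
  have hB : ∀ r : V L, F (r, j) + F (r + e L j, j) =
      if (r i = q i ∧ r k = p k ∧
          ((r j - p j - 1).val = m - 1 ∨ (r j - p j - 1).val = L - 1))
      then 1 else 0 := by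
    intro r
    rw [hFj r, hFj (r + e L j)]
    have e1 : (r + e L j) i = r i := by rw [hco1]; simp [hij]
    have e2 : (r + e L j) k = r k := by rw [hco1]; simp [hkj]
    have e3 : (r + e L j) j - q j = (r j - p j - 1) + 1 := by
      rw [hco1, if_pos rfl, hqj]; ring
    have e4 : r j - q j = r j - p j - 1 := by rw [hqj]; ring
    rw [e1, e2, e3, e4, hqk]
    by_cases hbc : r i = q i ∧ r k = p k
    · simp only [hbc.1, hbc.2, eq_self_iff_true, true_and]
      exact oneD L m hL hm1 hm2 (r j - p j - 1)
    · have hcf : ∀ X : Prop, ¬(r i = q i ∧ r k = p k ∧ X) := fun X h => hbc ⟨h.1, h.2.1⟩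
      rw [if_neg (hcf _), if_neg (hcf _), if_neg (hcf _)]
      decide
  -- syndrome decompositions
  have hsynI : ∀ r : V L, cellSyn L F i r = F (r, j) + F (r + e L j, j) := by
    intro r
    unfold cellSyn
    rw [filter_ne_fin3 i j k hij hik hjk, Finset.sum_pair hjk, hFk, hFk]
    simp
  have hsynJ : ∀ r : V L, cellSyn L F j r = F (r, i) + F (r + e L i, i) := by
    intro r
    unfold cellSyn
    rw [filter_ne_fin3 j i k hji hjk hik, Finset.sum_pair hik, hFk, hFk]
    simp
  have hsynK : ∀ r : V L, cellSyn L F k r =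
      (F (r, i) + F (r + e L i, i)) + (F (r, j) + F (r + e L j, j)) := by
    intro r
    unfold cellSyn
    rw [filter_ne_fin3 k i j hki hkj hij, Finset.sum_pair hij]
  -- numerics
  have hvn : ((n - 1 : ℕ) : ZMod L).val = n - 1 := ZMod.val_cast_of_lt (by omega)
  have hvm : ((m - 1 : ℕ) : ZMod L).val = m - 1 := ZMod.val_cast_of_lt (by omega)
  have hneg : ((L - 1 : ℕ) : ZMod L) = -1 := by
    have h0 : ((L : ℕ) : ZMod L) = 0 := ZMod.natCast_self L
    rw [Nat.cast_sub (by omega : 1 ≤ L), h0, Nat.cast_one, zero_sub]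
  have hvneg : (-1 : ZMod L).val = L - 1 := by
    rw [← hneg, ZMod.val_cast_of_lt (by omega)]
  have hm0 : (m : ZMod L) ≠ 0 := by
    intro h
    have := congrArg ZMod.val h
    rw [ZMod.val_cast_of_lt hm2, ZMod.val_zero] at this
    omega
  have hmcast : (1 : ZMod L) + ((m - 1 : ℕ) : ZMod L) = (m : ZMod L) := by
    rw [Nat.cast_sub (by omega : 1 ≤ m), Nat.cast_one]
    ring
  have hnL : ¬ ((n - 1 : ℕ) : ZMod L) = -1 := by
    intro h
    have := congrArg ZMod.val h
    rw [hvn, hvneg] at this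
    omega
  -- coordinates of the three defect cells
  have cP1i : (p - e L i) i = p i - 1 := by rw [hco2]; simp
  have cP1j : (p - e L i) j = p j := by rw [hco2]; simp [hji]
  have cP1k : (p - e L i) k = p k := by rw [hco2]; simp [hki]
  have cP3i : (p + ((n - 1 : ℕ) : ZMod L) • e L i) i = p i + ((n - 1 : ℕ) : ZMod L) := by
    rw [hco]; simp
  have cP3j : (p + ((n - 1 : ℕ) : ZMod L) • e L i) j = p j := by rw [hco]; simp [hji]
  have cP3k : (p + ((n - 1 : ℕ) : ZMod L) • e L i) k = p k := by rw [hco]; simp [hki]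
  have cP2i : (q + ((m - 1 : ℕ) : ZMod L) • e L j) i = q i := by rw [hco]; simp [hij]
  have cP2j : (q + ((m - 1 : ℕ) : ZMod L) • e L j) j = p j + (m : ZMod L) := by
    rw [hco, hqj, if_pos rfl, ← hmcast]; ring
  have cP2k : (q + ((m - 1 : ℕ) : ZMod L) • e L j) k = p k := by
    rw [hco, hqk]; simp [hjk.symm]
  -- A and B in terms of the defect cells
  have hAval : ∀ r : V L, F (r, i) + F (r + e L i, i) =
      if (r = p - e L i ∨ r = p + ((n - 1 : ℕ) : ZMod L) • e L i) then 1 else 0 := by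
    intro r
    rw [hA r]
    refine if_congr ?_ rfl rfl
    constructor
    · rintro ⟨h1, h2, h3 | h3⟩
      · right
        rw [veq]
        have h4 : r i - p i = ((n - 1 : ℕ) : ZMod L) :=
          (zmod_val_eq_iff _ _ (by omega)).mp h3
        rw [sub_eq_iff_eq_add'] at h4
        exact ⟨by rw [cP3i]; exact h4, by rw [cP3j]; exact h1, by rw [cP3k]; exact h2⟩
      · left
        rw [veq]
        have h4 : r i - p i = ((L - 1 : ℕ) : ZMod L) :=
          (zmod_val_eq_iff _ _ (by omega)).mp h3
        rw [hneg, sub_eq_iff_eq_add'] at h4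
        refine ⟨by rw [cP1i, h4]; ring, by rw [cP1j]; exact h1, by rw [cP1k]; exact h2⟩
    · rintro (rfl | rfl)
      · refine ⟨cP1j, cP1k, Or.inr ?_⟩
        have : (p - e L i) i - p i = -1 := by rw [cP1i]; ring
        rw [this, hvneg]
      · refine ⟨cP3j, cP3k, Or.inl ?_⟩
        have : (p + ((n - 1 : ℕ) : ZMod L) • e L i) i - p i = ((n - 1 : ℕ) : ZMod L) := by
          rw [cP3i]; ring
        rw [this, hvn]
  have hBval : ∀ r : V L, F (r, j) + F (r + e L j, j) =
      if (r = q + ((m - 1 : ℕ) : ZMod L) • e L j ∨ r = p + ((n - 1 : ℕ) : ZMod L) • e L i)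
      then 1 else 0 := by
    intro r
    rw [hB r]
    refine if_congr ?_ rfl rfl
    constructor
    · rintro ⟨h1, h2, h3 | h3⟩
      · left
        rw [veq]
        have h4 : r j - p j - 1 = ((m - 1 : ℕ) : ZMod L) :=
          (zmod_val_eq_iff _ _ (by omega)).mp h3
        have h5 : r j = p j + (m : ZMod L) := by
          rw [← hmcast]; linear_combination h4
        exact ⟨by rw [cP2i]; exact h1, by rw [cP2j]; exact h5, by rw [cP2k]; exact h2⟩
      · right
        rw [veq]
        have h4 : r j - p j - 1 = ((L - 1 : ℕ) : ZMod L) :=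
          (zmod_val_eq_iff _ _ (by omega)).mp h3
        rw [hneg] at h4
        have h5 : r j = p j := by linear_combination h4
        exact ⟨by rw [cP3i, ← hqi]; exact h1, by rw [cP3j]; exact h5, by rw [cP3k]; exact h2⟩
    · rintro (rfl | rfl)
      · refine ⟨cP2i, cP2k, Or.inl ?_⟩
        have : (q + ((m - 1 : ℕ) : ZMod L) • e L j) j - p j - 1 = ((m - 1 : ℕ) : ZMod L) := by
          rw [cP2j, ← hmcast]; ring
        rw [this, hvm]
      · refine ⟨by rw [cP3i, hqi], cP3k, Or.inr ?_⟩
        have : (p + ((n - 1 : ℕ) : ZMod L) • e L i) j - p j - 1 = -1 := by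
          rw [cP3j]; ring
        rw [this, hvneg]
  -- distinctness of the three cells
  have d12 : p - e L i ≠ q + ((m - 1 : ℕ) : ZMod L) • e L j := by
    intro h
    have := congrFun h j
    rw [cP1j, cP2j] at this
    exact hm0 (by linear_combination - this)
  have d13 : p - e L i ≠ p + ((n - 1 : ℕ) : ZMod L) • e L i := by
    intro h
    have := congrFun h i
    rw [cP1i, cP3i] at this
    exact hnL (by linear_combination - this)
  have d23 : q + ((m - 1 : ℕ) : ZMod L) • e L j ≠ p + ((n - 1 : ℕ) : ZMod L) • e L i := by
    intro h
    have := congrFun h j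
    rw [cP2j, cP3j] at this
    exact hm0 (by linear_combination this)
  refine ⟨⟨?_, ?_⟩, ⟨?_, ?_⟩, ⟨?_, ?_⟩, ?_⟩
  · rw [hsynI, hBval, if_neg]
    rintro (h | h)
    exacts [d12 h, d13 h]
  · intro c' hc'
    rcases tri c' with rfl | rfl | rfl
    · exact absurd rfl hc'
    · rw [hsynJ, hAval, if_pos (Or.inl rfl)]
    · rw [hsynK, hAval, hBval, if_pos (Or.inl rfl), if_neg]
      · decide
      · rintro (h | h)
        exacts [d12 h, d13 h]
  · rw [hsynJ, hAval, if_neg]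
    rintro (h | h)
    exacts [d12 h.symm, d23 h]
  · intro c' hc'
    rcases tri c' with rfl | rfl | rfl
    · rw [hsynI, hBval, if_pos (Or.inl rfl)]
    · exact absurd rfl hc'
    · rw [hsynK, hAval, hBval, if_pos (Or.inl rfl), if_neg]
      · decide
      · rintro (h | h)
        exacts [d12 h.symm, d23 h]
  · rw [hsynK, hAval, hBval, if_pos (Or.inr rfl), if_pos (Or.inr rfl)]
    decide
  · intro c' hc'
    rcases tri c' with rfl | rfl | rfl
    · rw [hsynI, hBval, if_pos (Or.inr rfl)]
    · rw [hsynJ, hAval, if_pos (Or.inr rfl)]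
    · exact absurd rfl hc'
  · intro r h1 h2 h3 c
    rcases tri c with rfl | rfl | rfl
    · rw [hsynI, hBval, if_neg (by rintro (h | h); exacts [h2 h, h3 h])]
    · rw [hsynJ, hAval, if_neg (by rintro (h | h); exacts [h1 h, h3 h])]
    · rw [hsynK, hAval, hBval, if_neg (by rintro (h | h); exacts [h1 h, h3 h]),
        if_neg (by rintro (h | h); exacts [h2 h, h3 h])]
      decide
end

section
/- For every Z-error E on the two-dimensional toric code and every subset R ⊆ (ZMod L)², the sum Σ_{v ∈ R} σ(E)(v) of star syndromes over R equals, in ZMod 2, the sum of E over the edges having exactly one endpoint in R, i.e. Σ over pairs (p, i) with exactly one of p, p + e_i in R of E(p, i). In particular, taking R to be all of (ZMod L)², the total number of star defects is even (the product of all star operators is the identity). (The generalized Gauss law of the toric code: the parity of e-excitations within a region equals the eigenvalue of an X-string operator on its boundary.) -/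
/-- The star syndrome of a Z-error `E` of the toric code at the vertex `v`. -/
def starSyn (L : ℕ) (E : V2 L × Fin 2 → ZMod 2) (v : V2 L) : ZMod 2 :=
  E (v, 0) + E (v, 1) + E (v - e2 L 0, 0) + E (v - e2 L 1, 1)

/-!
Each edge `(p, i)` enters the star syndromes of exactly its two endpoints `p` and `p + e_i`.
After reindexing the backward terms by `v = p + e_i`, the syndrome sum over `R` counts `E (p, i)`
once per endpoint in `R`, which in characteristic 2 leaves exactly the edges with one endpoint
in `R`. For `R` the whole torus every edge is counted twice, so the syndromes sum to zero and the
number of defects is even.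
-/

open Finset

theorem ite_add_ite_eq_ite_xor {R : Type*} [Ring R] [CharP R 2] (p q : Prop) [Decidable p]
    [Decidable q] (x : R) :
    ((if p then x else 0) + if q then x else 0) = if Xor p q then x else 0 := by
  by_cases hp : p <;> by_cases hq : q <;> simp [hp, hq, CharTwo.add_self_eq_zero]

theorem ZMod.even_card_filter_eq_one_of_sum_eq_zero {α : Type*} [Fintype α] {f : α → ZMod 2}
    (hf : ∑ x, f x = 0) : Even #{x | f x = 1} := by
  rw [← ZMod.natCast_eq_zero_iff_even, ← hf, natCast_card_filter]
  refine sum_congr rfl fun x _ => ?_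
  rcases (by decide : ∀ y : ZMod 2, y = 0 ∨ y = 1) (f x) with h | h <;> simp [h]

theorem Finset.sum_comp_sub_right {G M : Type*} [AddCommGroup G] [Fintype G] [AddCommMonoid M]
    (S : Finset G) (a : G) (g : G → M) [DecidablePred (· + a ∈ S)] :
    ∑ v ∈ S, g (v - a) = ∑ p, if p + a ∈ S then g p else 0 := by
  rw [← sum_filter]
  exact sum_nbij' (· - a) (· + a) (by simp) (by simp) (by simp) (by simp) (by simp)

section Star

variable {G ι R : Type*} [AddCommGroup G] [Fintype G] [DecidableEq G] [Fintype ι]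
  [Ring R] [CharP R 2]

def starSyndrome (d : ι → G) (E : G × ι → R) (v : G) : R :=
  ∑ i, (E (v, i) + E (v - d i, i))

theorem sum_starSyndrome_eq_sum_xor (d : ι → G) (E : G × ι → R) (S : Finset G) :
    ∑ v ∈ S, starSyndrome d E v = ∑ f with Xor (f.1 ∈ S) (f.1 + d f.2 ∈ S), E f := by
  calc ∑ v ∈ S, starSyndrome d E v
      = ∑ i, (∑ v ∈ S, E (v, i) + ∑ v ∈ S, E (v - d i, i)) := by
        simp only [starSyndrome]
        rw [sum_comm]
        simp_rw [sum_add_distrib]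
    _ = ∑ i, ∑ p, ((if p ∈ S then E (p, i) else 0) + if p + d i ∈ S then E (p, i) else 0) := by
        refine sum_congr rfl fun i _ => ?_
        rw [sum_comp_sub_right S (d i) (E ⟨·, i⟩), sum_add_distrib, sum_ite_mem, univ_inter]
    _ = ∑ f with Xor (f.1 ∈ S) (f.1 + d f.2 ∈ S), E f := by
        simp_rw [ite_add_ite_eq_ite_xor, sum_filter, Fintype.sum_prod_type]
        exact sum_comm

theorem sum_univ_starSyndrome (d : ι → G) (E : G × ι → R) : ∑ v, starSyndrome d E v = 0 := by
  simpa using sum_starSyndrome_eq_sum_xor d E univ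

end Star

theorem starSyn_eq_starSyndrome (L : ℕ) (E : V2 L × Fin 2 → ZMod 2) (v : V2 L) :
    starSyn L E v = starSyndrome (e2 L) E v := by
  simp only [starSyn, starSyndrome, Fin.sum_univ_two]
  ring

theorem stmt_16_general (L : ℕ) [NeZero L]
    (E : V2 L × Fin 2 → ZMod 2) (R : Finset (V2 L)) :
    (∑ v ∈ R, starSyn L E v =
      ∑ f ∈ Finset.univ.filter
        (fun f : V2 L × Fin 2 => Xor (f.1 ∈ R) (f.1 + e2 L f.2 ∈ R)), E f) ∧
    Even ((Finset.univ.filter (fun v : V2 L => starSyn L E v = 1)).card) := by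
  have hsyn : starSyn L E = starSyndrome (e2 L) E := funext (starSyn_eq_starSyndrome L E)
  rw [hsyn]
  exact ⟨sum_starSyndrome_eq_sum_xor _ E R,
    ZMod.even_card_filter_eq_one_of_sum_eq_zero (sum_univ_starSyndrome _ E)⟩

/-- The generalized Gauss law of the toric code: the sum of star syndromes over
a region `R` equals the sum of the error over the edges having exactly one
endpoint in `R`; in particular the total number of star defects is even. -/
theorem stmt_16 (L : ℕ) [NeZero L] (hL : 2 ≤ L)
    (E : V2 L × Fin 2 → ZMod 2) (R : Finset (V2 L)) :
    (∑ v ∈ R, starSyn L E v =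
      ∑ f ∈ Finset.univ.filter
        (fun f : V2 L × Fin 2 => Xor (f.1 ∈ R) (f.1 + e2 L f.2 ∈ R)), E f) ∧
    Even ((Finset.univ.filter (fun v : V2 L => starSyn L E v = 1)).card) :=
  stmt_16_general L E R
end

section
/- Let L ≥ 2, c ∈ Fin 3, a ∈ ZMod L, and let R be any subset of the dual-lattice plane {p ∈ V : p_c = a}. Then for every X-error F, Σ_{p ∈ R} σ_c(F)(p) = Σ_{i ≠ c} Σ over positions q ∈ V such that exactly one of q, q − e_i lies in R of F(q, i), computed in ZMod 2. (The generalized Gauss law of the X-cube model: the total c-colored syndrome in a region R of a planar materialized symmetry equals the mod-2 sum of the error over the faces of color ≠ c lying on the boundary of R; taking R to be the whole plane recovers the planar relation.) -/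
/-!
A face `(q, i)` with `i ≠ c` bounds exactly the two cells `q` and `q - e i`, so it enters
`∑ p ∈ R, σ_c(F)(p)` once for each of these cells lying in `R`. Mod 2 the faces with both cells
in `R` cancel, and what remains is the sum over the faces with exactly one cell in `R`.
-/

open Finset

lemma Finset.sum_symmDiff_of_charTwo {α R : Type*} [DecidableEq α] [Semiring R] [CharP R 2]
    (A B : Finset α) (f : α → R) :
    ∑ x ∈ symmDiff A B, f x = ∑ x ∈ A, f x + ∑ x ∈ B, f x := by
  rw [symmDiff_def, sup_eq_union, sum_union disjoint_sdiff_sdiff,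
    ← sum_inter_add_sum_sdiff A B f, ← sum_inter_add_sum_sdiff B A f, inter_comm B A,
    add_add_add_comm, CharTwo.add_self_eq_zero, zero_add]

lemma Finset.sum_add_comp_add_right_eq_sum_filter_xor {G R : Type*} [AddGroup G] [Fintype G]
    [DecidableEq G] [Semiring R] [CharP R 2] (S : Finset G) (t : G) (f : G → R) :
    ∑ p ∈ S, (f p + f (p + t)) = ∑ q ∈ univ.filter (fun q => Xor (q ∈ S) (q - t ∈ S)), f q := by
  have hboundary : univ.filter (fun q => Xor (q ∈ S) (q - t ∈ S)) =
      symmDiff S (S.map (Equiv.addRight t).toEmbedding) := by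
    ext q
    simp [mem_symmDiff, Xor, mem_map_equiv, sub_eq_add_neg]
  rw [hboundary, sum_symmDiff_of_charTwo, sum_map, sum_add_distrib]
  rfl

theorem stmt_17_general (L : ℕ) [NeZero L] (c : Fin 3)
    (R : Finset (V L)) (F : V L × Fin 3 → ZMod 2) :
    ∑ p ∈ R, cellSyn L F c p =
      ∑ i ∈ Finset.univ.filter (fun i : Fin 3 => i ≠ c),
        ∑ q ∈ Finset.univ.filter
          (fun q : V L => Xor (q ∈ R) (q - e L i ∈ R)), F (q, i) := by
  simp only [cellSyn]
  rw [sum_comm]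
  exact sum_congr rfl fun i _ =>
    sum_add_comp_add_right_eq_sum_filter_xor R (e L i) fun q => F (q, i)

/-- The generalized Gauss law of the X-cube model: for any region `R` of a
dual-lattice plane of color `c`, the total `c`-colored syndrome in `R` equals
the mod-2 sum of the error over the faces of color `≠ c` on the boundary of
`R`. -/
theorem stmt_17 (L : ℕ) [NeZero L] (hL : 2 ≤ L) (c : Fin 3) (a : ZMod L)
    (R : Finset (V L)) (hR : ∀ p ∈ R, p c = a) (F : V L × Fin 3 → ZMod 2) :
    ∑ p ∈ R, cellSyn L F c p =
      ∑ i ∈ Finset.univ.filter (fun i : Fin 3 => i ≠ c),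
        ∑ q ∈ Finset.univ.filter
          (fun q : V L => Xor (q ∈ R) (q - e L i ∈ R)), F (q, i) :=
  stmt_17_general L c R F
end

section
/- Let L ≥ 2 and fix x₀, y₀, z₀ ∈ ZMod L. Let X̄ be the X-error equal to 1 exactly on the L faces ((x₀, y₀, s), 2) for s ∈ ZMod L, and let Z̄ be the Z-error equal to 1 exactly on the L faces ((t, y₀, z₀), 2) for t ∈ ZMod L. Then: (i) σ_c(X̄) = 0 for every color c ∈ Fin 3; (ii) σ_A(Z̄) = 0 identically; and (iii) the supports of X̄ and Z̄ intersect in exactly one face, namely ((x₀, y₀, z₀), 2). (Hence the corresponding Pauli operators each commute with every stabilizer of the X-cube model yet anticommute with each other, exhibiting a mutually anticommuting logical pair with string-like support.) -/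
/-- A mutually anticommuting logical pair with string-like support: the closed
X-string and Z-string each commute with every stabilizer of the X-cube model,
and their supports intersect in exactly one face. -/
theorem stmt_19 (L : ℕ) (hL : 2 ≤ L) (x₀ y₀ z₀ : ZMod L)
    (Xbar Zbar : V L × Fin 3 → ZMod 2)
    (hX : ∀ (q : V L) (m : Fin 3), Xbar (q, m) = 1 ↔
      (m = 2 ∧ q 0 = x₀ ∧ q 1 = y₀))
    (hZ : ∀ (q : V L) (m : Fin 3), Zbar (q, m) = 1 ↔
      (m = 2 ∧ q 1 = y₀ ∧ q 2 = z₀)) :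
    (∀ (c : Fin 3) (p : V L), cellSyn L Xbar c p = 0) ∧
    (∀ v : V L, vertSyn L Zbar v = 0) ∧
    (∀ f : V L × Fin 3, (Xbar f = 1 ∧ Zbar f = 1) ↔
      f = ((![x₀, y₀, z₀] : V L), (2 : Fin 3))) := by
  have hXval : ∀ (q : V L) (m : Fin 3),
      Xbar (q, m) = if (m = 2 ∧ q 0 = x₀ ∧ q 1 = y₀) then 1 else 0 := by
    intro q m
    split_ifs with h
    · exact (hX q m).2 h
    · rcases zmod2_cases (Xbar (q, m)) with h0 | h1
      · exact h0
      · exact absurd ((hX q m).1 h1) h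
  have hZval : ∀ (q : V L) (m : Fin 3),
      Zbar (q, m) = if (m = 2 ∧ q 1 = y₀ ∧ q 2 = z₀) then 1 else 0 := by
    intro q m
    split_ifs with h
    · exact (hZ q m).2 h
    · rcases zmod2_cases (Zbar (q, m)) with h0 | h1
      · exact h0
      · exact absurd ((hZ q m).1 h1) h
  have key1 : ∀ x : ZMod 2, x + x = 0 := by decide
  refine ⟨?_, ?_, ?_⟩
  · intro c p
    have h0 : (p + e L 2) 0 = p 0 := by
      simp [e, Pi.single_eq_of_ne (show (0 : Fin 3) ≠ 2 by decide)]
    have h1 : (p + e L 2) 1 = p 1 := by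
      simp [e, Pi.single_eq_of_ne (show (1 : Fin 3) ≠ 2 by decide)]
    fin_cases c <;>
      simp_all [cellSyn, hXval, Finset.sum_filter, Fin.sum_univ_three, key1]
  · intro v
    simp only [vertSyn, hZval, Fin.sum_univ_three, Fin.sum_univ_two, oth,
      Matrix.cons_val_zero, Matrix.cons_val_one, Matrix.head_cons, Fin.val_zero,
      Fin.val_one, Nat.cast_zero, Nat.cast_one, zero_smul, one_smul, sub_zero,
      Matrix.cons_val_two, Matrix.tail_cons]
    simp only [e, Pi.sub_apply, Pi.single_apply, Fin.ext_iff]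
    norm_num
    split_ifs <;> simp_all <;> decide
  · intro f
    obtain ⟨q, m⟩ := f
    constructor
    · rintro ⟨h1, h2⟩
      obtain ⟨hm, hq0, hq1⟩ := (hX q m).1 h1
      obtain ⟨-, -, hq2⟩ := (hZ q m).1 h2
      refine Prod.ext ?_ hm
      funext j
      fin_cases j <;> simpa
    · rintro hf
      obtain ⟨h1, h2⟩ := Prod.mk.injEq .. ▸ hf
      constructor
      · exact (hX q m).2 ⟨by simp [h2], by simp [h1], by simp [h1]⟩
      · exact (hZ q m).2 ⟨by simp [h2], by simp [h1], by simp [h1]⟩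
end
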